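/- arXiv:2104.06110 — 8 statements merged into one kernel-verified Lean document; each statement's English description precedes it below -/
import Mathlib

section
/- Let α ∈ ℍ := {z ∈ ℂ : Im(z) > 0} and f(x) = log(x + α) with the branch log(r e^{iθ}) = log r + iθ, -π/2 ≤ θ < 3π/2. Then f(closure(ℍ)) is a convex subset of ℂ. -/
open Complex MeasureTheory Filter

/-- The paper's branch of the logarithm: `log (r e^{iθ}) = log r + iθ` with
`r > 0` and `-π/2 ≤ θ < 3π/2`. It agrees with `Complex.log` except on the open
third quadrant, where `2πi` is added. -/
noncomputable def plog (z : ℂ) : ℂ :=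
  if z.re < 0 ∧ z.im < 0 then Complex.log z + 2 * Real.pi * Complex.I else Complex.log z

/-- Complex power `z^w := exp (w log z)` with the paper's branch of logarithm. -/
noncomputable def ppow (z w : ℂ) : ℂ := Complex.exp (w * plog z)

/-- The Cauchy distribution `C(m, σ)` with density `(σ/π)/((x-m)² + σ²)`. -/
noncomputable def cauchyMeasure (m σ : ℝ) : Measure ℝ :=
  MeasureTheory.volume.withDensity
    (fun x => ENNReal.ofReal ((σ / Real.pi) / ((x - m) ^ 2 + σ ^ 2)))

/-- Concavity of `log ∘ sin` on `(0, π)`. -/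
lemma logsin_concave {y₁ y₂ a b : ℝ} (h₁ : y₁ ∈ Set.Ioo 0 Real.pi)
    (h₂ : y₂ ∈ Set.Ioo 0 Real.pi) (ha : 0 ≤ a) (hb : 0 ≤ b) (hab : a + b = 1) :
    a * Real.log (Real.sin y₁) + b * Real.log (Real.sin y₂)
      ≤ Real.log (Real.sin (a * y₁ + b * y₂)) := by
  have hs₁ : 0 < Real.sin y₁ := Real.sin_pos_of_pos_of_lt_pi h₁.1 h₁.2
  have hs₂ : 0 < Real.sin y₂ := Real.sin_pos_of_pos_of_lt_pi h₂.1 h₂.2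
  have hsin : a * Real.sin y₁ + b * Real.sin y₂ ≤ Real.sin (a * y₁ + b * y₂) := by
    have := strictConcaveOn_sin_Icc.concaveOn.2 (Set.mem_Icc.2 ⟨h₁.1.le, h₁.2.le⟩)
      (Set.mem_Icc.2 ⟨h₂.1.le, h₂.2.le⟩) ha hb hab
    simpa using this
  have hpos : 0 < a * Real.sin y₁ + b * Real.sin y₂ := by
    have := (convex_Ioi (0:ℝ)) hs₁ hs₂ ha hb hab
    simpa using this
  have hlog : a * Real.log (Real.sin y₁) + b * Real.log (Real.sin y₂)
      ≤ Real.log (a * Real.sin y₁ + b * Real.sin y₂) := by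
    have := strictConcaveOn_log_Ioi.concaveOn.2 (Set.mem_Ioi.2 hs₁) (Set.mem_Ioi.2 hs₂) ha hb hab
    simpa using this
  exact hlog.trans (Real.log_le_log hpos hsin)

theorem stmt_2 (α : ℂ) (hα : 0 < α.im) :
    Convex ℝ ((fun z : ℂ => plog (z + α)) '' {z : ℂ | 0 ≤ z.im}) := by
  have hset : (fun z : ℂ => plog (z + α)) '' {z : ℂ | 0 ≤ z.im}
      = {p : ℂ | 0 < p.im ∧ p.im < Real.pi ∧
          Real.log α.im ≤ p.re + Real.log (Real.sin p.im)} := by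
    ext p
    constructor
    · rintro ⟨z, hz, rfl⟩
      simp only [Set.mem_setOf_eq] at hz ⊢
      set w := z + α with hw
      have hwim : 0 < w.im := by
        have : w.im = z.im + α.im := by simp [hw]
        rw [this]; linarith
      have hwne : w ≠ 0 := fun h => by simp [h] at hwim
      have habs : 0 < ‖w‖ := norm_pos_iff.mpr hwne
      have hplog : plog w = Complex.log w := by
        rw [plog, if_neg]; rintro ⟨-, h⟩; linarith
      rw [hplog]
      have harg_pos : 0 < Complex.arg w := by
        refine lt_of_le_of_ne (Complex.arg_nonneg_iff.2 hwim.le) fun h => ?_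
        have := Complex.arg_eq_zero_iff.1 h.symm
        linarith [this.2]
      have harg_lt : Complex.arg w < Real.pi :=
        Complex.arg_lt_pi_iff.2 (Or.inr (ne_of_gt hwim))
      refine ⟨by rwa [Complex.log_im], by rwa [Complex.log_im], ?_⟩
      rw [Complex.log_re, Complex.log_im]
      have hsin : Real.sin (Complex.arg w) = w.im / ‖w‖ := Complex.sin_arg w
      rw [hsin, Real.log_div (ne_of_gt hwim) (ne_of_gt habs)]
      have : α.im ≤ w.im := by
        have : w.im = z.im + α.im := by simp [hw]
        rw [this]; linarith
      have := Real.log_le_log hα this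
      linarith
    · rintro ⟨h1, h2, h3⟩
      refine ⟨Complex.exp p - α, ?_, ?_⟩
      · simp only [Set.mem_setOf_eq, Complex.sub_im]
        have hsin : 0 < Real.sin p.im := Real.sin_pos_of_pos_of_lt_pi h1 h2
        have : α.im ≤ (Complex.exp p).im := by
          rw [Complex.exp_im]
          calc α.im = Real.exp (Real.log α.im) := (Real.exp_log hα).symm
            _ ≤ Real.exp (p.re + Real.log (Real.sin p.im)) := Real.exp_le_exp.2 h3
            _ = Real.exp p.re * Real.sin p.im := by
                rw [Real.exp_add, Real.exp_log hsin]
        linarith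
      · simp only
        rw [sub_add_cancel]
        have him : (Complex.exp p).im = Real.exp p.re * Real.sin p.im := Complex.exp_im p
        have hsin : 0 < Real.sin p.im := Real.sin_pos_of_pos_of_lt_pi h1 h2
        have hexpim : 0 < (Complex.exp p).im := by
          rw [him]; positivity
        rw [plog, if_neg (by rintro ⟨-, h⟩; linarith)]
        exact Complex.log_exp (by linarith [Real.pi_pos]) h2.le
  rw [hset]
  intro p hp q hq a b ha hb hab
  simp only [Set.mem_setOf_eq] at hp hq ⊢
  have him : (a • p + b • q).im = a * p.im + b * q.im := by
    simp [Complex.add_im, Complex.smul_im]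
  have hre : (a • p + b • q).re = a * p.re + b * q.re := by
    simp [Complex.add_re, Complex.smul_re]
  have hmem : a * p.im + b * q.im ∈ Set.Ioo 0 Real.pi := by
    have := (convex_Ioo (0:ℝ) Real.pi) ⟨hp.1, hp.2.1⟩ ⟨hq.1, hq.2.1⟩ ha hb hab
    simpa using this
  refine ⟨by rw [him]; exact hmem.1, by rw [him]; exact hmem.2, ?_⟩
  rw [him, hre]
  have hconc := logsin_concave ⟨hp.1, hp.2.1⟩ ⟨hq.1, hq.2.1⟩ ha hb hab
  have h1 := hp.2.2
  have h2 := hq.2.2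
  have hs : Real.log α.im = a * Real.log α.im + b * Real.log α.im := by
    rw [← add_mul, hab, one_mul]
  linarith [hconc, mul_le_mul_of_nonneg_left h1 ha, mul_le_mul_of_nonneg_left h2 hb]
end

section
/- Let α ∈ ℍ and g(z) = (z + conj(α))/(z + α). Then g maps closure(ℍ) onto {z ∈ ℂ : |z| ≤ 1} \ {1}, and for any x_1, …, x_n ∈ closure(ℍ), the quasi-arithmetic mean with generator g satisfies g^{-1}((1/n)∑_{j=1}^n g(x_j)) = (∑_{j=1}^n x_j/(x_j+α)) / (∑_{j=1}^n 1/(x_j+α)). -/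
open Complex MeasureTheory Filter

theorem stmt_5 (α : ℂ) (hα : 0 < α.im) :
    ((fun z : ℂ => (z + (starRingEnd ℂ) α) / (z + α)) '' {z : ℂ | 0 ≤ z.im}
        = {z : ℂ | ‖z‖ ≤ 1} \ {1}) ∧
    ∀ (n : ℕ), 0 < n → ∀ x : Fin n → ℂ, (∀ i, 0 ≤ (x i).im) →
      (let w := (n : ℂ)⁻¹ * ∑ i, (x i + (starRingEnd ℂ) α) / (x i + α)
       ((starRingEnd ℂ) α - α * w) / (w - 1)
          = (∑ i, x i / (x i + α)) / (∑ i, (x i + α)⁻¹)) := by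
  have hconj : ((starRingEnd ℂ) α).im = -α.im := Complex.conj_im α
  have hdiff : (starRingEnd ℂ) α - α ≠ 0 := by
    intro h
    have := congrArg Complex.im h
    simp [hconj] at this
    linarith
  constructor
  · ext w
    simp only [Set.mem_image, Set.mem_setOf_eq, Set.mem_diff, Set.mem_singleton_iff]
    constructor
    · rintro ⟨z, hz, rfl⟩
      have hden : z + α ≠ 0 := by
        intro h
        have := congrArg Complex.im h
        simp at this
        linarith
      have hdenpos : 0 < Complex.normSq (z + α) := by
        simpa [Complex.normSq_pos] using hden
      constructor
      · rw [norm_div, div_le_one (norm_pos_iff.mpr hden)]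
        rw [Complex.norm_def, Complex.norm_def]
        apply Real.sqrt_le_sqrt
        simp only [Complex.normSq_apply, Complex.add_re, Complex.add_im, hconj,
          Complex.conj_re]
        nlinarith [hz, hα]
      · intro h
        rw [div_eq_one_iff_eq hden] at h
        have : (starRingEnd ℂ) α = α := by linear_combination h
        exact hdiff (by rw [this]; ring)
    · rintro ⟨hle, hne⟩
      have hw1 : w - 1 ≠ 0 := sub_ne_zero.mpr hne
      have hns1 : 0 < Complex.normSq (w - 1) := by
        simpa [Complex.normSq_pos] using hw1
      have hnsw : Complex.normSq w ≤ 1 := by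
        have := Complex.sq_norm w
        nlinarith [norm_nonneg w]
      refine ⟨((starRingEnd ℂ) α - α * w) / (w - 1), ?_, ?_⟩
      · -- imaginary part nonneg
        rw [Complex.div_im]
        have him : (((starRingEnd ℂ) α - α * w).im * (w - 1).re
            - ((starRingEnd ℂ) α - α * w).re * (w - 1).im)
            = α.im * (1 - Complex.normSq w) := by
          simp [Complex.normSq_apply, Complex.sub_im, Complex.sub_re, Complex.mul_im,
            Complex.mul_re, hconj, Complex.conj_re]
          ring
        have : 0 ≤ α.im * (1 - Complex.normSq w) := by nlinarith
        rw [div_sub_div_same]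
        apply div_nonneg _ hns1.le
        linarith [him ▸ this]
      · -- g of that point is w
        have h1 : ((starRingEnd ℂ) α - α * w) / (w - 1) + α
            = ((starRingEnd ℂ) α - α) / (w - 1) := by
          field_simp
          ring
        have h2 : ((starRingEnd ℂ) α - α * w) / (w - 1) + (starRingEnd ℂ) α
            = w * (((starRingEnd ℂ) α - α) / (w - 1)) := by
          field_simp
          ring
        simp only [h1, h2]
        exact mul_div_cancel_right₀ w (div_ne_zero hdiff hw1)
  · intro n hn x hx
    intro w
    have hxden : ∀ i, x i + α ≠ 0 := by
      intro i h
      have := congrArg Complex.im h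
      simp at this
      have := hx i
      linarith
    set S := ∑ i, (x i + α)⁻¹ with hS
    have hSim : S.im < 0 := by
      rw [hS]
      have : ∀ i : Fin n, (((x i + α)⁻¹ : ℂ)).im < 0 := by
        intro i
        rw [Complex.inv_im]
        have h1 : 0 < Complex.normSq (x i + α) := by
          simpa [Complex.normSq_pos] using hxden i
        have h2 : 0 < (x i + α).im := by simp; linarith [hx i]
        rw [neg_div]
        exact neg_neg_of_pos (div_pos h2 h1)
      calc (∑ i, (x i + α)⁻¹).im = ∑ i, ((x i + α)⁻¹).im := by
            exact Complex.im_sum _ _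
        _ < 0 := Finset.sum_neg (fun i _ => this i) ⟨⟨0, hn⟩, Finset.mem_univ _⟩
    have hSne : S ≠ 0 := fun h => by simp [h] at hSim
    have hnne : (n : ℂ) ≠ 0 := Nat.cast_ne_zero.mpr hn.ne'
    have hsum1 : (∑ i, (x i + (starRingEnd ℂ) α) / (x i + α))
        = (n : ℂ) + ((starRingEnd ℂ) α - α) * S := by
      have key : ∀ i : Fin n, (x i + (starRingEnd ℂ) α) / (x i + α)
          = 1 + ((starRingEnd ℂ) α - α) * (x i + α)⁻¹ := by
        intro i
        rw [← div_eq_mul_inv, div_eq_iff (hxden i), add_mul, one_mul,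
          div_mul_cancel₀ _ (hxden i)]
        ring
      rw [Finset.sum_congr rfl (fun i _ => key i), Finset.sum_add_distrib]
      simp [hS, Finset.mul_sum]
    have hsum2 : (∑ i, x i / (x i + α)) = (n : ℂ) - α * S := by
      have key : ∀ i : Fin n, x i / (x i + α) = 1 - α * (x i + α)⁻¹ := by
        intro i
        rw [eq_sub_iff_add_eq, ← div_eq_mul_inv, ← add_div,
          div_self (hxden i)]
      rw [Finset.sum_congr rfl (fun i _ => key i), Finset.sum_sub_distrib]
      simp [hS, Finset.mul_sum]
    have hwval : w = 1 + ((starRingEnd ℂ) α - α) * S / n := by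
      rw [show w = (n : ℂ)⁻¹ * ∑ i, (x i + (starRingEnd ℂ) α) / (x i + α) from rfl, hsum1]
      field_simp
    have hw1 : w - 1 ≠ 0 := by
      rw [hwval]
      simp only [add_sub_cancel_left]
      exact div_ne_zero (mul_ne_zero hdiff hSne) hnne
    rw [hsum2, hwval]
    rw [show (1 : ℂ) + ((starRingEnd ℂ) α - α) * S / n - 1
        = ((starRingEnd ℂ) α - α) * S / n by ring]
    field_simp
    ring
end

section
/- Let α ∈ ℍ with Im α > 0 and b > 0 with b ≠ |α|... For x_1 = b, x_2 = -b, one has |x_1/(x_1+α) + x_2/(x_2+α)| = 2b²/|b²-α²| and |1/(x_1+α) + 1/(x_2+α)| = 2|α|/|b²-α²|; consequently the Möbius quasi-arithmetic mean of b and -b has absolute value b²/|α|, which exceeds b = max(|x_1|,|x_2|) whenever b > |α|. -/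
open Complex MeasureTheory Filter

theorem stmt_6 (α : ℂ) (hα : 0 < α.im) (b : ℝ) (hb : 0 < b)
    (hbα : (b : ℂ) ^ 2 ≠ α ^ 2) :
    ‖(b : ℂ) / (b + α) + (-b : ℂ) / (-b + α)‖
        = 2 * b ^ 2 / ‖(b : ℂ) ^ 2 - α ^ 2‖ ∧
    ‖((b : ℂ) + α)⁻¹ + ((-b : ℂ) + α)⁻¹‖
        = 2 * ‖α‖ / ‖(b : ℂ) ^ 2 - α ^ 2‖ ∧
    ‖((b : ℂ) / (b + α) + (-b : ℂ) / (-b + α)) /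
        (((b : ℂ) + α)⁻¹ + ((-b : ℂ) + α)⁻¹)‖ = b ^ 2 / ‖α‖ ∧
    (‖α‖ < b →
      b < ‖((b : ℂ) / (b + α) + (-b : ℂ) / (-b + α)) /
        (((b : ℂ) + α)⁻¹ + ((-b : ℂ) + α)⁻¹)‖) := by
  have hα0 : α ≠ 0 := by
    intro h; rw [h] at hα; simp at hα
  have h1 : (b : ℂ) + α ≠ 0 := by
    intro h
    have := congrArg Complex.im h
    simp at this
    exact hα.ne' this
  have h2 : (-b : ℂ) + α ≠ 0 := by
    intro h
    have := congrArg Complex.im h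
    simp at this
    exact hα.ne' this
  have h3 : (b : ℂ) ^ 2 - α ^ 2 ≠ 0 := sub_ne_zero.2 hbα
  have eqA : (b : ℂ) / (b + α) + (-b : ℂ) / (-b + α)
      = 2 * (b : ℂ) ^ 2 / ((b : ℂ) ^ 2 - α ^ 2) := by
    field_simp
    ring
  have eqB : ((b : ℂ) + α)⁻¹ + ((-b : ℂ) + α)⁻¹ = 2 * α / (α ^ 2 - (b : ℂ) ^ 2) := by
    have h3' : α ^ 2 - (b : ℂ) ^ 2 ≠ 0 := fun h => h3 (by rw [← neg_sub] at h; simpa using neg_eq_zero.mp (h ▸ rfl))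
    field_simp
    ring
  have hA : ‖(b : ℂ) / (b + α) + (-b : ℂ) / (-b + α)‖
      = 2 * b ^ 2 / ‖(b : ℂ) ^ 2 - α ^ 2‖ := by
    rw [eqA, norm_div]
    congr 1
    have : (2 * (b : ℂ) ^ 2) = ((2 * b ^ 2 : ℝ) : ℂ) := by push_cast; ring
    rw [this, Complex.norm_real, Real.norm_eq_abs, abs_of_pos (by positivity)]
  have hB : ‖((b : ℂ) + α)⁻¹ + ((-b : ℂ) + α)⁻¹‖
      = 2 * ‖α‖ / ‖(b : ℂ) ^ 2 - α ^ 2‖ := by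
    rw [eqB, norm_div, norm_mul]
    rw [show α ^ 2 - (b : ℂ) ^ 2 = -((b : ℂ) ^ 2 - α ^ 2) by ring, norm_neg]
    simp
  have hC : ‖((b : ℂ) / (b + α) + (-b : ℂ) / (-b + α)) /
      (((b : ℂ) + α)⁻¹ + ((-b : ℂ) + α)⁻¹)‖ = b ^ 2 / ‖α‖ := by
    have hq : ((b : ℂ) / (b + α) + (-b : ℂ) / (-b + α)) /
        (((b : ℂ) + α)⁻¹ + ((-b : ℂ) + α)⁻¹) = -((b : ℂ) ^ 2 / α) := by
      rw [eqA, eqB]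
      field_simp
      ring
    rw [hq, norm_neg, norm_div]
    congr 1
    rw [show ((b : ℂ) ^ 2) = ((b ^ 2 : ℝ) : ℂ) by push_cast; ring, Complex.norm_real, Real.norm_eq_abs,
      abs_of_pos (by positivity)]
  refine ⟨hA, hB, hC, fun hlt => ?_⟩
  rw [hC]
  have hαpos : 0 < ‖α‖ := norm_pos_iff.mpr hα0
  rw [lt_div_iff₀ hαpos]
  nlinarith
end

section
/- Let α ∈ ℝ and x_1, …, x_n ∈ ℝ with x_j + α ≠ 0 for all j. Then Im(∏_{j=1}^n (x_j + α)^{1/n} - α) = (∏_{j=1}^n |x_j + α|^{1/n}) · sin(ℓπ/n), where ℓ = #{j : x_j + α < 0}; consequently this imaginary part is zero if and only if all the signs of x_j + α coincide (ℓ = 0 or ℓ = n). -/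
open Complex MeasureTheory Filter

lemma ppow_real_factor (t : ℝ) (ht : t ≠ 0) (n : ℕ) (hn : 0 < n) :
    ppow (t : ℂ) ((1:ℂ)/n) =
      ((|t| ^ ((1:ℝ)/n) : ℝ) : ℂ) *
        Complex.exp (((if t < 0 then Real.pi / n else 0 : ℝ) : ℂ) * Complex.I) := by
  have hplog : plog (t : ℂ) =
      ((Real.log |t| : ℝ) : ℂ) + ((if t < 0 then Real.pi else 0 : ℝ) : ℂ) * Complex.I := by
    rw [plog]
    simp only [Complex.ofReal_im, lt_irrefl, and_false, if_false]
    rcases lt_or_gt_of_ne ht with h | h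
    · rw [if_pos h]
      apply Complex.ext
      · simp [Complex.log_re, Complex.norm_real]
      · simp [Complex.log_im, Complex.arg_ofReal_of_neg h]
    · rw [if_neg (not_lt.mpr h.le), abs_of_pos h, ← Complex.ofReal_log h.le]
      simp
  have hn' : (n : ℝ) ≠ 0 := by positivity
  rw [ppow, hplog, mul_add, Complex.exp_add]
  congr 1
  · rw [Real.rpow_def_of_pos (abs_pos.mpr ht), Complex.ofReal_exp]
    congr 1
    push_cast
    ring
  · congr 1
    rcases lt_or_gt_of_ne ht with h | h <;>
      simp only [if_pos h, if_neg (not_lt.mpr h.le)] <;> push_cast <;> ring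

theorem stmt_11 (α : ℝ) (n : ℕ) (hn : 0 < n) (x : Fin n → ℝ)
    (hx : ∀ j : Fin n, x j + α ≠ 0) :
    ((∏ j, ppow (((x j + α : ℝ) : ℂ)) ((1 : ℂ) / n)) - (α : ℂ)).im
        = (∏ j, |x j + α| ^ ((1 : ℝ) / n)) *
          Real.sin (((Finset.univ.filter fun j : Fin n => x j + α < 0).card * Real.pi) / n) ∧
    (((∏ j, ppow (((x j + α : ℝ) : ℂ)) ((1 : ℂ) / n)) - (α : ℂ)).im = 0 ↔
      (Finset.univ.filter fun j : Fin n => x j + α < 0).card = 0 ∨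
      (Finset.univ.filter fun j : Fin n => x j + α < 0).card = n) := by
  set s := Finset.univ.filter fun j : Fin n => x j + α < 0 with hs
  set P : ℝ := ∏ j, |x j + α| ^ ((1:ℝ)/n) with hP
  have hnR : (n : ℝ) ≠ 0 := by positivity
  have hPpos : 0 < P :=
    Finset.prod_pos fun j _ => Real.rpow_pos_of_pos (abs_pos.mpr (hx j)) _
  have hsum : (∑ j, (if x j + α < 0 then Real.pi / n else 0)) = s.card * Real.pi / n := by
    rw [Finset.sum_ite, Finset.sum_const, Finset.sum_const, smul_zero, add_zero, hs]
    simp [nsmul_eq_mul, mul_div_assoc]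
  have key : (∏ j, ppow (((x j + α : ℝ) : ℂ)) ((1 : ℂ) / n))
      = (P : ℂ) * Complex.exp (((s.card * Real.pi / n : ℝ) : ℂ) * Complex.I) := by
    have h1 : ∀ j : Fin n, ppow (((x j + α : ℝ) : ℂ)) ((1 : ℂ) / n)
        = ((|x j + α| ^ ((1:ℝ)/n) : ℝ) : ℂ) *
          Complex.exp (((if x j + α < 0 then Real.pi / n else 0 : ℝ) : ℂ) * Complex.I) :=
      fun j => ppow_real_factor _ (hx j) n hn
    rw [Finset.prod_congr rfl fun j _ => h1 j, Finset.prod_mul_distrib,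
      ← Complex.exp_sum, hP, Complex.ofReal_prod]
    congr 1
    rw [← Finset.sum_mul, ← Complex.ofReal_sum, hsum]
  have him : ((∏ j, ppow (((x j + α : ℝ) : ℂ)) ((1 : ℂ) / n)) - (α : ℂ)).im
      = P * Real.sin (s.card * Real.pi / n) := by
    rw [key, Complex.sub_im, Complex.mul_im]
    simp only [Complex.ofReal_re, Complex.ofReal_im, Complex.exp_ofReal_mul_I_im,
      Complex.exp_ofReal_mul_I_re, zero_mul, add_zero, sub_zero]
  have hcard : s.card ≤ n := by
    simpa using Finset.card_filter_le Finset.univ fun j : Fin n => x j + α < 0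
  refine ⟨him, ?_⟩
  rw [him, mul_eq_zero, or_iff_right hPpos.ne']
  constructor
  · intro h
    by_contra hc
    push_neg at hc
    obtain ⟨h0, hnn⟩ := hc
    have hp : 0 < s.card := Nat.pos_of_ne_zero h0
    have h1 : 0 < (s.card : ℝ) * Real.pi / n :=
      div_pos (mul_pos (by exact_mod_cast hp) Real.pi_pos) (by positivity)
    have h2 : (s.card : ℝ) * Real.pi / n < Real.pi := by
      rw [div_lt_iff₀ (by positivity : (0:ℝ) < n)]
      have : (s.card : ℝ) < n := by exact_mod_cast lt_of_le_of_ne hcard hnn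
      nlinarith [Real.pi_pos]
    exact absurd h (Real.sin_pos_of_pos_of_lt_pi h1 h2).ne'
  · rintro (h | h) <;> rw [h]
    · simp
    · rw [mul_comm, mul_div_assoc, div_self hnR, mul_one]
      exact Real.sin_pi
end

section
/- Let α ∈ ℍ with Im α = 1 and x_1, …, x_n ∈ ℝ. Write x_j + α = r_j e^{iθ_j} with r_j > 0, 0 < θ_j < π. Then Im(∏_{j=1}^n (x_j+α)^{1/n}) = exp(log sin((1/n)∑_j θ_j) - (1/n)∑_j log sin θ_j), and this quantity is strictly greater than 1 = Im(α) unless x_1 = x_2 = ⋯ = x_n, in which case it equals 1. -/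
open Complex MeasureTheory Filter

theorem stmt_12 (α : ℂ) (hα : α.im = 1) (n : ℕ) (hn : 0 < n) (x : Fin n → ℝ) :
    (∏ j, ppow ((x j : ℂ) + α) ((1 : ℂ) / n)).im
        = Real.exp (Real.log (Real.sin ((1 / n : ℝ) * ∑ j, Complex.arg ((x j : ℂ) + α)))
            - (1 / n : ℝ) * ∑ j, Real.log (Real.sin (Complex.arg ((x j : ℂ) + α)))) ∧
    ((∀ i j : Fin n, x i = x j) →
      (∏ j, ppow ((x j : ℂ) + α) ((1 : ℂ) / n)).im = 1) ∧
    (¬(∀ i j : Fin n, x i = x j) →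
      1 < (∏ j, ppow ((x j : ℂ) + α) ((1 : ℂ) / n)).im) := by

  classical
  set z : Fin n → ℂ := fun j => (x j : ℂ) + α with hz
  set θ : Fin n → ℝ := fun j => Complex.arg (z j) with hθ
  have hzim : ∀ j, (z j).im = 1 := by intro j; simp [hz, hα]
  have hzne : ∀ j, z j ≠ 0 := by
    intro j h
    have := hzim j
    rw [h] at this
    simp at this
  have hθpos : ∀ j, 0 < θ j := by
    intro j
    rcases lt_or_eq_of_le (Complex.arg_nonneg_iff.2 (by rw [hzim j]; norm_num)) with h | h
    · exact h
    · exfalso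
      have := (Complex.arg_eq_zero_iff).1 h.symm
      rw [hzim j] at this
      norm_num at this
  have hθlt : ∀ j, θ j < Real.pi := by
    intro j
    rcases lt_or_eq_of_le (Complex.arg_le_pi (z j)) with h | h
    · exact h
    · exfalso
      have := (Complex.arg_eq_pi_iff).1 h
      rw [hzim j] at this
      norm_num at this
  have habs : ∀ j, Real.sin (θ j) = 1 / ‖z j‖ := by
    intro j
    rw [hθ]
    simp only
    rw [Complex.sin_arg, hzim j]
  have hsinpos : ∀ j, 0 < Real.sin (θ j) := fun j =>
    Real.sin_pos_of_pos_of_lt_pi (hθpos j) (hθlt j)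
  have hlogabs : ∀ j, Real.log ‖z j‖ = - Real.log (Real.sin (θ j)) := by
    intro j
    rw [habs j, one_div, Real.log_inv, neg_neg]
  -- the product equals exp of a sum
  have hplog : ∀ j, plog (z j) = Complex.log (z j) := by
    intro j
    rw [plog, if_neg]
    rintro ⟨-, h⟩
    rw [hzim j] at h
    norm_num at h
  have hprod : (∏ j, ppow (z j) ((1 : ℂ) / n))
      = Complex.exp (∑ j, ((1 : ℂ) / n) * Complex.log (z j)) := by
    rw [Complex.exp_sum]
    exact Finset.prod_congr rfl fun j _ => by rw [ppow, hplog j]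
  set A : ℝ := (1 / n : ℝ) * ∑ j, Real.log (Real.sin (θ j)) with hA
  set B : ℝ := (1 / n : ℝ) * ∑ j, θ j with hB
  have hsum : (∑ j, ((1 : ℂ) / n) * Complex.log (z j)) = Complex.ofReal (-A) + Complex.ofReal B * Complex.I := by
    apply Complex.ext
    · rw [Complex.re_sum]
      simp only [Complex.mul_re]
      have : ∀ j ∈ Finset.univ, ((1 : ℂ) / n).re * (Complex.log (z j)).re
          - ((1 : ℂ) / n).im * (Complex.log (z j)).im
          = (1 / n : ℝ) * (- Real.log (Real.sin (θ j))) := by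
        intro j _
        rw [Complex.log_re, Complex.log_im, hlogabs j]
        simp
      rw [Finset.sum_congr rfl this]
      simp only [mul_neg, Finset.sum_neg_distrib, ← Finset.mul_sum]
      simp [hA]
    · rw [Complex.im_sum]
      simp only [Complex.mul_im]
      have : ∀ j ∈ Finset.univ, ((1 : ℂ) / n).re * (Complex.log (z j)).im
          + ((1 : ℂ) / n).im * (Complex.log (z j)).re
          = (1 / n : ℝ) * θ j := by
        intro j _
        rw [Complex.log_im]
        simp [hθ]
      rw [Finset.sum_congr rfl this]
      simp [hB, ← Finset.mul_sum]
  have hBpos : 0 < B := by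
    rw [hB]
    have : 0 < ∑ j, θ j :=
      Finset.sum_pos (fun j _ => hθpos j) ⟨⟨0, hn⟩, Finset.mem_univ _⟩
    positivity
  have hBlt : B < Real.pi := by
    rw [hB]
    have h1 : ∑ j, θ j < ∑ _j : Fin n, Real.pi :=
      Finset.sum_lt_sum_of_nonempty ⟨⟨0, hn⟩, Finset.mem_univ _⟩ (fun j _ => hθlt j)
    rw [Finset.sum_const, Finset.card_univ, Fintype.card_fin, nsmul_eq_mul] at h1
    rw [one_div, inv_mul_lt_iff₀ (by exact_mod_cast hn)]
    linarith
  have hsinB : 0 < Real.sin B := Real.sin_pos_of_pos_of_lt_pi hBpos hBlt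
  have himeq : (∏ j, ppow (z j) ((1 : ℂ) / n)).im
      = Real.exp (Real.log (Real.sin B) - A) := by
    rw [hprod, hsum, Complex.exp_im]
    simp only [Complex.add_re, Complex.add_im, Complex.ofReal_re, Complex.ofReal_im,
      Complex.mul_re, Complex.mul_im, Complex.I_re, Complex.I_im]
    rw [show -A + (B * 0 - 0 * 1) = -A by ring, show (0:ℝ) + (B * 1 + 0 * 0) = B by ring]
    rw [Real.exp_sub, Real.exp_log hsinB, Real.exp_neg]
    ring
  refine ⟨himeq, ?_, ?_⟩
  · -- all equal case
    intro hall
    have hθconst : ∀ j, θ j = θ ⟨0, hn⟩ := by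
      intro j
      have : z j = z ⟨0, hn⟩ := by rw [hz]; simp [hall j ⟨0, hn⟩]
      simp only [hθ, this]
    have hAeq : A = Real.log (Real.sin (θ ⟨0, hn⟩)) := by
      rw [hA, Finset.sum_congr rfl (fun j _ => by rw [hθconst j])]
      rw [Finset.sum_const, Finset.card_univ, Fintype.card_fin, nsmul_eq_mul]
      field_simp
    have hBeq : B = θ ⟨0, hn⟩ := by
      rw [hB, Finset.sum_congr rfl (fun j _ => hθconst j)]
      rw [Finset.sum_const, Finset.card_univ, Fintype.card_fin, nsmul_eq_mul]
      field_simp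
    rw [himeq, hAeq, hBeq, sub_self, Real.exp_zero]
  · -- strict inequality case
    intro hne
    push_neg at hne
    obtain ⟨i, j, hij⟩ := hne
    have hθne : θ i ≠ θ j := by
      intro h
      apply hij
      have hzij : z i = z j := by
        have hi := Complex.norm_mul_exp_arg_mul_I (z i)
        have hj := Complex.norm_mul_exp_arg_mul_I (z j)
        have habsij : ‖z i‖ = ‖z j‖ := by
          have h1 := habs i
          have h2 := habs j
          rw [h] at h1
          rw [h1] at h2
          have hpi := norm_pos_iff.2 (hzne i)
          have hpj := norm_pos_iff.2 (hzne j)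
          rw [div_eq_div_iff hpi.ne' hpj.ne'] at h2
          linarith
        rw [← hi, ← hj, habsij]
        congr 2
        exact congrArg (fun t : ℝ => (t : ℂ) * Complex.I) h
      have := congrArg Complex.re hzij
      simpa [hz] using this
    have hw : ∑ _j : Fin n, (1 / n : ℝ) = 1 := by
      rw [Finset.sum_const, Finset.card_univ, Fintype.card_fin, nsmul_eq_mul]
      field_simp
    have hwpos : ∀ k : Fin n, k ∈ Finset.univ → 0 < (1 / n : ℝ) := by
      intro k _
      positivity
    -- strict Jensen for sin
    have hstep1 : ∑ k, (1 / n : ℝ) • Real.sin (θ k)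
        < Real.sin (∑ k, (1 / n : ℝ) • θ k) := by
      apply strictConcaveOn_sin_Icc.lt_map_sum hwpos hw
      · intro k _
        exact ⟨(hθpos k).le, (hθlt k).le⟩
      · exact ⟨i, Finset.mem_univ _, j, Finset.mem_univ _, hθne⟩
    -- Jensen for log
    have hstep2 : ∑ k, (1 / n : ℝ) • Real.log (Real.sin (θ k))
        ≤ Real.log (∑ k, (1 / n : ℝ) • Real.sin (θ k)) := by
      apply strictConcaveOn_log_Ioi.concaveOn.le_map_sum (fun k _ => by positivity) hw
      intro k _
      exact hsinpos k
    have hspos : 0 < ∑ k, (1 / n : ℝ) • Real.sin (θ k) :=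
      Finset.sum_pos (fun k _ => by have := hsinpos k; positivity)
        ⟨⟨0, hn⟩, Finset.mem_univ _⟩
    have hBsum : (∑ k, (1 / n : ℝ) • θ k) = B := by
      rw [hB, Finset.mul_sum]; rfl
    have hAsum : (∑ k, (1 / n : ℝ) • Real.log (Real.sin (θ k))) = A := by
      rw [hA, Finset.mul_sum]; rfl
    have hkey : A < Real.log (Real.sin B) := by
      calc A = ∑ k, (1 / n : ℝ) • Real.log (Real.sin (θ k)) := hAsum.symm
        _ ≤ Real.log (∑ k, (1 / n : ℝ) • Real.sin (θ k)) := hstep2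
        _ < Real.log (Real.sin (∑ k, (1 / n : ℝ) • θ k)) := Real.log_lt_log hspos hstep1
        _ = Real.log (Real.sin B) := by rw [hBsum]
    rw [himeq]
    have : (0 : ℝ) < Real.log (Real.sin B) - A := by linarith
    calc (1 : ℝ) = Real.exp 0 := Real.exp_zero.symm
      _ < Real.exp (Real.log (Real.sin B) - A) := Real.exp_lt_exp.2 this
end

section
/- For α ∈ ℍ and any x_1, …, x_n ∈ ℝ, the harmonic-type bound |n / ∑_{j=1}^n 1/(x_j+α)|² ≤ (1/Im(α)²) · ∏_{j=1}^n |x_j + α|^{4/n} holds; the first inequality is |n/∑_j 1/(x_j+α)| ≤ (1/Im α) · (n / ∑_j |x_j+α|^{-2}) and the second is the geometric–harmonic mean inequality. -/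
open Complex MeasureTheory Filter

theorem stmt_13 (α : ℂ) (hα : 0 < α.im) (n : ℕ) (hn : 0 < n) (x : Fin n → ℝ) :
    ‖(n : ℂ) / ∑ j, ((x j : ℂ) + α)⁻¹‖
        ≤ (α.im)⁻¹ * ((n : ℝ) / ∑ j, (‖(x j : ℂ) + α‖ ^ 2)⁻¹) ∧
    (n : ℝ) / (∑ j, (‖(x j : ℂ) + α‖ ^ 2)⁻¹)
        ≤ ∏ j, ‖(x j : ℂ) + α‖ ^ ((2 : ℝ) / n) ∧
    ‖(n : ℂ) / ∑ j, ((x j : ℂ) + α)⁻¹‖ ^ 2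
        ≤ (α.im ^ 2)⁻¹ * ∏ j, ‖(x j : ℂ) + α‖ ^ ((4 : ℝ) / n) := by
  have hnpos : (0 : ℝ) < n := Nat.cast_pos.2 hn
  set z : Fin n → ℂ := fun j => (x j : ℂ) + α with hz
  have hzim : ∀ j, (z j).im = α.im := by intro j; simp [hz]
  have hzne : ∀ j, z j ≠ 0 := by
    intro j h
    have h2 := hzim j
    rw [h] at h2
    simp at h2
    exact absurd h2.symm (ne_of_gt hα)
  have habs : ∀ j, 0 < ‖z j‖ := fun j => norm_pos_iff.2 (hzne j)
  set S : ℝ := ∑ j, (‖z j‖ ^ 2)⁻¹ with hS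
  have hSpos : 0 < S :=
    Finset.sum_pos (fun j _ => inv_pos.2 (pow_pos (habs j) 2)) ⟨⟨0, hn⟩, Finset.mem_univ _⟩
  -- imaginary part of the sum
  have him : (∑ j, (z j)⁻¹).im = -(α.im * S) := by
    rw [Complex.im_sum, hS, Finset.mul_sum, ← Finset.sum_neg_distrib]
    refine Finset.sum_congr rfl fun j _ => ?_
    rw [Complex.inv_im, Complex.sq_norm, hzim j]
    field_simp
  have hlb : α.im * S ≤ ‖∑ j, (z j)⁻¹‖ := by
    calc α.im * S = |(∑ j, (z j)⁻¹).im| := by rw [him, abs_neg, abs_of_pos (mul_pos hα hSpos)]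
    _ ≤ ‖∑ j, (z j)⁻¹‖ := Complex.abs_im_le_norm _
  have hsumpos : 0 < ‖∑ j, (z j)⁻¹‖ := lt_of_lt_of_le (mul_pos hα hSpos) hlb
  have part1 : ‖(n : ℂ) / ∑ j, (z j)⁻¹‖ ≤ (α.im)⁻¹ * ((n : ℝ) / S) := by
    rw [norm_div, Complex.norm_natCast]
    have : (α.im)⁻¹ * ((n : ℝ) / S) = (n : ℝ) / (α.im * S) := by
      field_simp
    rw [this]
    exact div_le_div_of_nonneg_left hnpos.le (mul_pos hα hSpos) hlb
  set P : ℝ := ∏ j, ‖z j‖ ^ ((2 : ℝ) / n) with hP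
  have hPpos : 0 < P := Finset.prod_pos fun j _ => Real.rpow_pos_of_pos (habs j) _
  have part2 : (n : ℝ) / S ≤ P := by
    have amgm := Real.geom_mean_le_arith_mean_weighted Finset.univ (fun _ => (n : ℝ)⁻¹)
      (fun j => (‖z j‖ ^ 2)⁻¹)
      (fun i _ => by positivity)
      (by simp [Finset.card_univ]; field_simp)
      (fun i _ => by positivity)
    have hL : ∏ j, ((‖z j‖ ^ 2)⁻¹ : ℝ) ^ ((n : ℝ)⁻¹) = P⁻¹ := by
      rw [hP, ← Finset.prod_inv_distrib]
      refine Finset.prod_congr rfl fun j _ => ?_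
      rw [Real.inv_rpow (by positivity), ← Real.rpow_natCast (‖z j‖) 2,
        ← Real.rpow_mul (habs j).le]
      norm_num
      rw [div_eq_mul_inv]
    have hR : ∑ j, ((n : ℝ)⁻¹ * (‖z j‖ ^ 2)⁻¹) = (n : ℝ)⁻¹ * S := by
      rw [hS, Finset.mul_sum]
    rw [hL, hR] at amgm
    rw [div_le_iff₀ hSpos]
    have h2 := mul_le_mul_of_nonneg_left amgm (le_of_lt (mul_pos hnpos hPpos))
    calc (n : ℝ) = (n : ℝ) * P * P⁻¹ := by field_simp
    _ ≤ (n : ℝ) * P * ((n : ℝ)⁻¹ * S) := h2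
    _ = P * S := by field_simp
  refine ⟨part1, part2, ?_⟩
  have hsq : ∏ j, ‖z j‖ ^ ((4 : ℝ) / n) = P ^ 2 := by
    rw [hP, ← Finset.prod_pow]
    refine Finset.prod_congr rfl fun j _ => ?_
    rw [← Real.rpow_natCast (‖z j‖ ^ ((2:ℝ)/n)) 2, ← Real.rpow_mul (habs j).le]
    norm_num
    ring_nf
  rw [hsq]
  calc ‖(n : ℂ) / ∑ j, (z j)⁻¹‖ ^ 2 ≤ ((α.im)⁻¹ * ((n : ℝ) / S)) ^ 2 :=
        pow_le_pow_left₀ (norm_nonneg _) part1 2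
  _ ≤ ((α.im)⁻¹ * P) ^ 2 :=
        pow_le_pow_left₀ (mul_nonneg (inv_nonneg.2 hα.le) (div_nonneg hnpos.le hSpos.le))
          (mul_le_mul_of_nonneg_left part2 (inv_nonneg.2 hα.le)) 2
  _ = (α.im ^ 2)⁻¹ * P ^ 2 := by rw [mul_pow, inv_pow]
end

section
/- Let X_1 follow the Cauchy distribution C(μ, σ) with density p(x) = (σ/π)/((x-μ)² + σ²), and let f : U → ℂ be holomorphic on a simply connected domain U containing the closed upper half-plane, with E[|f(X_1)|] < ∞, lim_{R→∞} (1/R) sup_{|z|=R, Im z ≥ 0} |f(z)| = 0. Then E[f(X_1)] = f(μ + σi). -/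
open Complex MeasureTheory Filter

/-- Partial fraction decomposition identity. -/
lemma key_alg (m σ : ℝ) (z : ℂ)
    (hza : z ≠ (m : ℂ) + σ * Complex.I) (hzb : z ≠ (m : ℂ) - σ * Complex.I) :
    (2 * (Real.pi : ℂ) * Complex.I)⁻¹ *
        ((z - ((m : ℂ) + σ * Complex.I))⁻¹ - (z - ((m : ℂ) - σ * Complex.I))⁻¹)
      = ((σ : ℂ) / (Real.pi : ℂ)) *
        ((z - ((m : ℂ) + σ * Complex.I)) * (z - ((m : ℂ) - σ * Complex.I)))⁻¹ := by
  have h1 : z - ((m : ℂ) + σ * Complex.I) ≠ 0 := sub_ne_zero.mpr hza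
  have h2 : z - ((m : ℂ) - σ * Complex.I) ≠ 0 := sub_ne_zero.mpr hzb
  have hπ : (Real.pi : ℂ) ≠ 0 := by exact_mod_cast Real.pi_ne_zero
  have hI : Complex.I ≠ 0 := Complex.I_ne_zero
  rw [inv_sub_inv h1 h2, div_eq_mul_inv, ← mul_assoc]
  congr 1
  field_simp
  ring

lemma real_fact (m σ : ℝ) (x : ℝ) :
    ((x : ℂ) - ((m : ℂ) + σ * Complex.I)) * ((x : ℂ) - ((m : ℂ) - σ * Complex.I))
      = (((x - m) ^ 2 + σ ^ 2 : ℝ) : ℂ) := by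
  push_cast
  ring_nf
  simp [Complex.I_sq]

/-- The boundary-rectangle identity specialised to rectangles sitting on the real axis. -/
lemma rect_id (G : ℂ → ℂ) (W : Set ℂ) (hW : {z : ℂ | 0 ≤ z.im} ⊆ W)
    (hGdiff : DifferentiableOn ℂ G W) (R : ℝ) (hR : 0 ≤ R) :
    (∫ x in (-R)..R, G (x : ℂ)) =
      (∫ x in (-R)..R, G ((x : ℂ) + (R : ℂ) * Complex.I))
        - Complex.I • (∫ y in (0:ℝ)..R, G ((R : ℂ) + (y : ℂ) * Complex.I))
        + Complex.I • (∫ y in (0:ℝ)..R, G ((-R : ℂ) + (y : ℂ) * Complex.I)) := by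
  have hsubset : (Set.uIcc (-R) R ×ℂ Set.uIcc 0 R) ⊆ W := by
    intro z hz
    apply hW
    have h2 := hz.2
    rw [Set.uIcc_of_le hR] at h2
    exact h2.1
  have key := Complex.integral_boundary_rect_eq_zero_of_differentiableOn G
    (-(R : ℂ)) ((R : ℂ) + (R : ℂ) * Complex.I) (by
      apply hGdiff.mono
      convert hsubset using 2 <;> simp)
  simp only [Complex.neg_re, Complex.ofReal_re, Complex.neg_im, Complex.ofReal_im,
    Complex.add_re, Complex.add_im, Complex.mul_re, Complex.mul_im, Complex.I_re,
    Complex.I_im, mul_zero, mul_one, zero_mul, sub_zero, add_zero, zero_add, neg_zero,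
    Complex.ofReal_zero, zero_mul, add_zero] at key
  rw [Complex.ofReal_neg] at key
  linear_combination key

/-- The interval integral of the Cauchy density tends to `1`. -/
lemma cauchy_density_tendsto_one (m σ : ℝ) (hσ : 0 < σ) :
    Tendsto (fun R : ℝ => ∫ x in (-R)..R, (σ / Real.pi) / ((x - m) ^ 2 + σ ^ 2))
      atTop (nhds 1) := by
  have hπ : (0 : ℝ) < Real.pi := Real.pi_pos
  set F : ℝ → ℝ := fun x => (1 / Real.pi) * Real.arctan ((x - m) / σ) with hF_def
  have hF : ∀ x : ℝ, HasDerivAt F ((σ / Real.pi) / ((x - m) ^ 2 + σ ^ 2)) x := by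
    intro x
    have h1 : HasDerivAt (fun x : ℝ => (x - m) / σ) (1 / σ) x := by
      simpa using ((hasDerivAt_id x).sub_const m).div_const σ
    have h2 := (Real.hasDerivAt_arctan ((x - m) / σ)).comp x h1
    have h3 := h2.const_mul (1 / Real.pi)
    refine h3.congr_deriv ?_
    have hσ' : σ ≠ 0 := hσ.ne'
    have hd : (0:ℝ) < (x - m) ^ 2 + σ ^ 2 := by positivity
    field_simp
    ring
  have hcalc : ∀ R : ℝ, (∫ x in (-R)..R, (σ / Real.pi) / ((x - m) ^ 2 + σ ^ 2))
      = F R - F (-R) := by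
    intro R
    apply intervalIntegral.integral_eq_sub_of_hasDerivAt (fun x _ => hF x)
    apply Continuous.intervalIntegrable
    apply Continuous.div continuous_const (by continuity)
    intro x
    have : (0:ℝ) < (x - m) ^ 2 + σ ^ 2 := by positivity
    exact this.ne'
  have hup : Tendsto (fun R : ℝ => (R - m) / σ) atTop atTop := by
    apply Tendsto.atTop_div_const hσ
    simpa [sub_eq_add_neg] using tendsto_atTop_add_const_right atTop (-m) tendsto_id
  have hdown : Tendsto (fun R : ℝ => (-R - m) / σ) atTop atBot := by
    apply Tendsto.atBot_div_const hσ
    simpa [sub_eq_add_neg] using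
      tendsto_atBot_add_const_right atTop (-m) tendsto_neg_atTop_atBot
  have harctanup : Tendsto (fun R : ℝ => Real.arctan ((R - m) / σ)) atTop
      (nhds (Real.pi / 2)) :=
    (tendsto_nhds_of_tendsto_nhdsWithin Real.tendsto_arctan_atTop).comp hup
  have harctandown : Tendsto (fun R : ℝ => Real.arctan ((-R - m) / σ)) atTop
      (nhds (-(Real.pi / 2))) :=
    (tendsto_nhds_of_tendsto_nhdsWithin Real.tendsto_arctan_atBot).comp hdown
  have hcomb := ((harctanup.const_mul (1 / Real.pi)).sub
    (harctandown.const_mul (1 / Real.pi)))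
  have hval : (1 / Real.pi) * (Real.pi / 2) - (1 / Real.pi) * (-(Real.pi / 2)) = 1 := by
    field_simp
    norm_num
  rw [hval] at hcomb
  apply hcomb.congr
  intro R
  rw [hcalc R]

set_option maxHeartbeats 1000000 in
theorem stmt_14 (m σ : ℝ) (hσ : 0 < σ) (U : Set ℂ) (hU : IsOpen U)
    (hUconn : IsConnected U) (hUsc : SimplyConnectedSpace U)
    (hUH : {z : ℂ | 0 ≤ z.im} ⊆ U)
    (f : ℂ → ℂ) (hf : DifferentiableOn ℂ f U)
    (hint : Integrable (fun x : ℝ => f (x : ℂ)) (cauchyMeasure m σ))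
    (hsub : Tendsto (fun R : ℝ =>
        (1 / R) * sSup ((fun z => ‖f z‖) ''
          {z : ℂ | ‖z‖ = R ∧ 0 ≤ z.im})) atTop (nhds 0)) :
    ∫ x : ℝ, f (x : ℂ) ∂(cauchyMeasure m σ) = f ((m : ℂ) + σ * Complex.I) := by
  have hπ : (0 : ℝ) < Real.pi := Real.pi_pos
  set a : ℂ := (m : ℂ) + σ * Complex.I with ha_def
  set b : ℂ := (m : ℂ) - σ * Complex.I with hb_def
  have ha_im : a.im = σ := by simp [ha_def]
  have hb_im : b.im = -σ := by simp [hb_def]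
  have haU : a ∈ U := hUH (by simp only [Set.mem_setOf_eq, ha_im]; exact hσ.le)
  set den : ℝ → ℝ := fun x => (σ / Real.pi) / ((x - m) ^ 2 + σ ^ 2) with hden_def
  have hden_pos : ∀ x, 0 < den x := fun x => by
    have h1 : (0:ℝ) < (x - m) ^ 2 + σ ^ 2 := by positivity
    exact div_pos (div_pos hσ hπ) h1
  have hdenC : Continuous den := by
    apply Continuous.div continuous_const (by continuity)
    intro x
    have h1 : (0:ℝ) < (x - m) ^ 2 + σ ^ 2 := by positivity
    exact h1.ne'
  have hfC : Continuous fun x : ℝ => f (x : ℂ) := by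
    refine ContinuousOn.comp_continuous hf.continuousOn Complex.continuous_ofReal fun x => hUH ?_
    simp
  -- measure rewrite
  have hμ : cauchyMeasure m σ = volume.withDensity (fun x => ((den x).toNNReal : ENNReal)) := rfl
  have hsmul : ∀ (x : ℝ) (v : ℂ), (den x).toNNReal • v = (den x : ℂ) * v := by
    intro x v
    rw [NNReal.smul_def, Real.coe_toNNReal _ (hden_pos x).le, Complex.real_smul]
  have hmeasd : Measurable fun x => (den x).toNNReal :=
    (continuous_real_toNNReal.comp hdenC).measurable
  have hIeq : ∫ x : ℝ, f (x : ℂ) ∂(cauchyMeasure m σ) = ∫ x : ℝ, (den x : ℂ) * f x := by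
    rw [hμ, integral_withDensity_eq_integral_smul hmeasd]
    simp only [hsmul]
  have hInt : Integrable (fun x : ℝ => (den x : ℂ) * f x) volume := by
    have h := (integrable_withDensity_iff_integrable_smul hmeasd).mp (hμ ▸ hint)
    simpa only [hsmul] using h
  -- the auxiliary function G
  set G : ℂ → ℂ := fun z =>
    (2 * (Real.pi : ℂ) * Complex.I)⁻¹ * (dslope f a z - (f z - f a) * (z - b)⁻¹) with hG_def
  have hGid : ∀ z : ℂ, z ≠ a → z ≠ b →
      G z = ((σ : ℂ) / (Real.pi : ℂ)) * ((z - a) * (z - b))⁻¹ * (f z - f a) := by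
    intro z hza hzb
    have hd : dslope f a z = (z - a)⁻¹ * (f z - f a) := by
      rw [dslope_of_ne f hza, slope_def_module, smul_eq_mul]
    have h1 : G z = ((2 * (Real.pi : ℂ) * Complex.I)⁻¹ * ((z - a)⁻¹ - (z - b)⁻¹)) *
        (f z - f a) := by
      rw [hG_def]; simp only; rw [hd]; ring
    rw [h1, key_alg m σ z hza hzb]
  have hGreal : ∀ x : ℝ, G (x : ℂ) = (den x : ℂ) * f x - (den x : ℂ) * f a := by
    intro x
    have hxa : (x : ℂ) ≠ a := by
      intro h
      have := congrArg Complex.im h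
      rw [ha_im, Complex.ofReal_im] at this
      exact hσ.ne this
    have hxb : (x : ℂ) ≠ b := by
      intro h
      have := congrArg Complex.im h
      rw [hb_im, Complex.ofReal_im] at this
      have : σ = 0 := by linarith
      exact hσ.ne' this
    rw [hGid x hxa hxb, real_fact m σ x]
    have h1 : (((x - m) ^ 2 + σ ^ 2 : ℝ) : ℂ) ≠ 0 := by
      exact_mod_cast (by positivity : (0:ℝ) < (x - m) ^ 2 + σ ^ 2).ne'
    rw [hden_def]
    push_cast
    field_simp
  -- differentiability of G
  set V : Set ℂ := U ∩ (Complex.im ⁻¹' Set.Ioi (-σ)) with hV_def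
  have hVopen : IsOpen V := hU.inter (isOpen_Ioi.preimage Complex.continuous_im)
  have haV : a ∈ V := ⟨haU, by simp only [Set.mem_preimage, ha_im, Set.mem_Ioi]; linarith⟩
  have hHV : {z : ℂ | 0 ≤ z.im} ⊆ V := fun z hz =>
    ⟨hUH hz, by
      simp only [Set.mem_preimage, Set.mem_Ioi]
      have h0 : (0:ℝ) ≤ z.im := hz
      linarith⟩
  have hGdiff : DifferentiableOn ℂ G V := by
    have h1 : DifferentiableOn ℂ (dslope f a) V :=
      (differentiableOn_dslope (hVopen.mem_nhds haV)).2 (hf.mono Set.inter_subset_left)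
    have h2 : DifferentiableOn ℂ (fun z => (f z - f a) * (z - b)⁻¹) V := by
      apply DifferentiableOn.mul ((hf.mono Set.inter_subset_left).sub_const _)
      apply DifferentiableOn.inv (differentiableOn_id.sub_const _)
      intro z hz
      rw [sub_ne_zero]
      intro h
      have hzb : z = b := h
      have h2 := hz.2
      rw [hzb, Set.mem_preimage, hb_im, Set.mem_Ioi] at h2
      exact lt_irrefl _ h2
    exact (h1.sub h2).const_mul _
  -- limit of the bottom edge
  have hdenCC : Continuous fun x : ℝ => ((den x : ℝ) : ℂ) :=
    Complex.continuous_ofReal.comp hdenC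
  have hBsplit : ∀ R : ℝ, (∫ x in (-R)..R, G (x : ℂ))
      = (∫ x in (-R)..R, (den x : ℂ) * f x)
        - ((∫ x in (-R)..R, den x : ℝ) : ℂ) * f a := by
    intro R
    have e1 : (∫ x in (-R)..R, G (x : ℂ))
        = ∫ x in (-R)..R, ((den x : ℂ) * f x - (den x : ℂ) * f a) :=
      intervalIntegral.integral_congr fun x _ => hGreal x
    rw [e1, intervalIntegral.integral_sub
      ((show Continuous fun x : ℝ => (den x : ℂ) * f x from hdenCC.mul hfC).intervalIntegrable _ _)
      ((show Continuous fun x : ℝ => (den x : ℂ) * f a from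
        hdenCC.mul continuous_const).intervalIntegrable _ _)]
    congr 1
    rw [intervalIntegral.integral_mul_const, intervalIntegral.integral_ofReal]
  have hT1 : Tendsto (fun R : ℝ => ∫ x in (-R)..R, (den x : ℂ) * f x) atTop
      (nhds (∫ x : ℝ, (den x : ℂ) * f x)) :=
    intervalIntegral_tendsto_integral hInt tendsto_neg_atTop_atBot tendsto_id
  have hT2 : Tendsto (fun R : ℝ => ((∫ x in (-R)..R, den x : ℝ) : ℂ)) atTop
      (nhds (1 : ℂ)) := by
    have := cauchy_density_tendsto_one m σ hσ
    have h2 := (Complex.continuous_ofReal.tendsto 1).comp this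
    exact h2
  have hBlim : Tendsto (fun R : ℝ => ∫ x in (-R)..R, G (x : ℂ)) atTop
      (nhds ((∫ x : ℝ, (den x : ℂ) * f x) - f a)) := by
    have h := hT1.sub (hT2.mul (tendsto_const_nhds (x := f a)))
    rw [one_mul] at h
    apply h.congr
    intro R
    rw [hBsplit R]
  -- the sup bound
  set M : ℝ → ℝ := fun R => sSup ((fun z => ‖f z‖) ''
      {z : ℂ | ‖z‖ = R ∧ 0 ≤ z.im}) with hM_def
  have hfM : ∀ z : ℂ, 0 ≤ z.im → ‖f z‖ ≤ M (‖z‖) := by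
    intro z hz
    refine le_csSup ?_ (Set.mem_image_of_mem _ ⟨rfl, hz⟩)
    set r := ‖z‖
    have hcl : IsClosed {w : ℂ | ‖w‖ = r ∧ 0 ≤ w.im} := by
      apply IsClosed.inter
      · exact isClosed_eq continuous_norm continuous_const
      · exact isClosed_le continuous_const Complex.continuous_im
    have hbd : Bornology.IsBounded {w : ℂ | ‖w‖ = r ∧ 0 ≤ w.im} := by
      apply Bornology.IsBounded.subset (Metric.isBounded_closedBall (x := (0:ℂ)) (r := r))
      intro w hw
      simp only [Metric.mem_closedBall, Complex.dist_eq, sub_zero]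
      exact le_of_eq hw.1
    have hcpt : IsCompact {w : ℂ | ‖w‖ = r ∧ 0 ≤ w.im} :=
      Metric.isCompact_of_isClosed_isBounded hcl hbd
    have hcont : ContinuousOn (fun z => ‖f z‖)
        {w : ℂ | ‖w‖ = r ∧ 0 ≤ w.im} := by
      apply continuous_norm.comp_continuousOn
      exact hf.continuousOn.mono fun w hw => hUH hw.2
    exact (hcpt.image_of_continuousOn hcont).bddAbove
  -- edge function and its limit
  set E : ℝ → ℂ := fun R =>
    (∫ x in (-R)..R, G ((x : ℂ) + (R : ℂ) * Complex.I))
      - Complex.I • (∫ y in (0:ℝ)..R, G ((R : ℂ) + (y : ℂ) * Complex.I))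
      + Complex.I • (∫ y in (0:ℝ)..R, G ((-R : ℂ) + (y : ℂ) * Complex.I)) with hE_def
  set c : ℝ := ‖a‖ with hc_def
  have hc0 : 0 ≤ c := norm_nonneg a
  have hcb : ‖b‖ = c := by
    have hba : b = (starRingEnd ℂ) a := by
      rw [ha_def, hb_def]
      apply Complex.ext <;> simp
    rw [hba, hc_def, Complex.norm_conj]
  set A : ℝ := ‖f a‖ with hA_def
  have hA0 : 0 ≤ A := norm_nonneg _
  have hE0 : Tendsto E atTop (nhds 0) := by
    rw [NormedAddCommGroup.tendsto_nhds_zero]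
    intro ε hε
    set δ : ℝ := ε * Real.pi / (100 * (σ + 1)) with hδ_def
    have hδ : 0 < δ := by
      apply div_pos (mul_pos hε hπ)
      nlinarith
    obtain ⟨R₁, hR₁⟩ := (Metric.tendsto_atTop.mp hsub) δ hδ
    have hM_bound : ∀ r : ℝ, R₁ ≤ r → 1 ≤ r → M r ≤ δ * r := by
      intro r h1 h2
      have hr0 : 0 < r := lt_of_lt_of_le one_pos h2
      have := hR₁ r h1
      rw [Real.dist_eq, sub_zero] at this
      have h3 : (1 / r) * M r < δ := lt_of_le_of_lt (le_abs_self _) this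
      have h4 : M r = r * ((1 / r) * M r) := by field_simp
      rw [h4]
      calc r * ((1 / r) * M r) ≤ r * δ := by
            apply mul_le_mul_of_nonneg_left h3.le hr0.le
        _ = δ * r := mul_comm r δ
    filter_upwards [eventually_ge_atTop (max (max R₁ 1) (max (2 * c + 1) (A / δ + 1)))]
      with R hR
    have hRR₁ : R₁ ≤ R := le_trans (le_max_left _ _) (le_trans (le_max_left _ _) hR)
    have hR1 : 1 ≤ R := le_trans (le_max_right _ _) (le_trans (le_max_left _ _) hR)
    have hRc : 2 * c + 1 ≤ R := le_trans (le_max_left _ _) (le_trans (le_max_right _ _) hR)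
    have hRA : A / δ + 1 ≤ R := le_trans (le_max_right _ _) (le_trans (le_max_right _ _) hR)
    have hR0 : 0 < R := lt_of_lt_of_le one_pos hR1
    have hRc' : 0 < R - c := by linarith
    set C : ℝ := (σ / Real.pi) * (2 * δ * R + A) / (R - c) ^ 2 with hC_def
    have hC0 : 0 ≤ C := by
      apply div_nonneg _ (sq_nonneg _)
      apply mul_nonneg (div_nonneg hσ.le hπ.le)
      nlinarith
    -- pointwise bound on the edges
    have hzbd : ∀ z : ℂ, 0 ≤ z.im → R ≤ ‖z‖ → ‖z‖ ≤ 2 * R →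
        ‖G z‖ ≤ C := by
      intro z hzim hz1 hz2
      have hza : z ≠ a := by
        intro h
        rw [h] at hz1
        rw [← hc_def] at hz1
        linarith
      have hzb : z ≠ b := by
        intro h
        rw [h] at hz1
        rw [hcb] at hz1
        linarith
      have h1 : ‖(σ : ℂ)‖ = σ := by
        rw [Complex.norm_real, Real.norm_eq_abs, abs_of_pos hσ]
      have h2 : ‖(Real.pi : ℂ)‖ = Real.pi := by
        rw [Complex.norm_real, Real.norm_eq_abs, abs_of_pos hπ]
      have key1 : ‖G z‖ = (σ / Real.pi) *
          ((‖z - a‖) * (‖z - b‖))⁻¹ * ‖f z - f a‖ := by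
        rw [hGid z hza hzb]
        rw [norm_mul, norm_mul, norm_inv, norm_mul, norm_div, h1, h2]
      have e1 : R - c ≤ ‖z - a‖ := by
        have h := norm_sub_norm_le z a
        rw [← hc_def] at h
        linarith
      have e2 : R - c ≤ ‖z - b‖ := by
        have h := norm_sub_norm_le z b
        rw [hcb] at h
        linarith
      have habsz1 : (1:ℝ) ≤ ‖z‖ := le_trans hR1 hz1
      have e3 : ‖f z - f a‖ ≤ 2 * δ * R + A := by
        have h4 : ‖f z‖ ≤ δ * ‖z‖ :=
          le_trans (hfM z hzim) (hM_bound _ (le_trans hRR₁ hz1) habsz1)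
        have h5 : ‖f z - f a‖ ≤ ‖f z‖ + A := by
          have := norm_sub_le (f z) (f a)
          rw [← hA_def] at this
          exact this
        have h6 : δ * ‖z‖ ≤ δ * (2 * R) :=
          mul_le_mul_of_nonneg_left hz2 hδ.le
        calc ‖f z - f a‖ ≤ ‖f z‖ + A := h5
          _ ≤ δ * (2 * R) + A := by linarith
          _ = 2 * δ * R + A := by ring
      rw [key1, hC_def]
      have hposa : (0:ℝ) < ‖z - a‖ := lt_of_lt_of_le hRc' e1
      have hposb : (0:ℝ) < ‖z - b‖ := lt_of_lt_of_le hRc' e2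
      calc (σ / Real.pi) * ((‖z - a‖) * (‖z - b‖))⁻¹ *
            ‖f z - f a‖
          ≤ (σ / Real.pi) * (((R - c) * (R - c))⁻¹) * (2 * δ * R + A) := by
            apply mul_le_mul
            · apply mul_le_mul_of_nonneg_left _ (div_nonneg hσ.le hπ.le)
              apply inv_anti₀ (mul_pos hRc' hRc')
              exact mul_le_mul e1 e2 hRc'.le (norm_nonneg _)
            · exact e3
            · exact norm_nonneg _
            · positivity
        _ = (σ / Real.pi) * (2 * δ * R + A) / (R - c) ^ 2 := by
            rw [pow_two]
            field_simp
    -- edge integral bounds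
    have h2R : -R ≤ R := by linarith
    have htop : ‖∫ x in (-R)..R, G ((x : ℂ) + (R : ℂ) * Complex.I)‖ ≤ C * |R - (-R)| := by
      apply intervalIntegral.norm_integral_le_of_norm_le_const
      intro x hx
      rw [Set.uIoc_of_le h2R] at hx
      have hxabs : |x| ≤ R := abs_le.mpr ⟨hx.1.le, hx.2⟩
      set z : ℂ := (x : ℂ) + (R : ℂ) * Complex.I with hz_def
      have him : z.im = R := by simp [hz_def]
      have hre : z.re = x := by simp [hz_def]
      have hge : R ≤ ‖z‖ := by
        have h := Complex.abs_im_le_norm z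
        rw [him, abs_of_pos hR0] at h
        exact h
      have hle : ‖z‖ ≤ 2 * R := by
        have h := Complex.norm_le_abs_re_add_abs_im z
        rw [hre, him, abs_of_pos hR0] at h
        linarith
      exact hzbd z (by rw [him]; exact hR0.le) hge hle
    have hright : ‖∫ y in (0:ℝ)..R, G ((R : ℂ) + (y : ℂ) * Complex.I)‖ ≤ C * |R - 0| := by
      apply intervalIntegral.norm_integral_le_of_norm_le_const
      intro y hy
      rw [Set.uIoc_of_le hR0.le] at hy
      set z : ℂ := (R : ℂ) + (y : ℂ) * Complex.I with hz_def
      have him : z.im = y := by simp [hz_def]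
      have hre : z.re = R := by simp [hz_def]
      have hge : R ≤ ‖z‖ := by
        have h := Complex.abs_re_le_norm z
        rw [hre, abs_of_pos hR0] at h
        exact h
      have hle : ‖z‖ ≤ 2 * R := by
        have h := Complex.norm_le_abs_re_add_abs_im z
        rw [hre, him, abs_of_pos hR0, abs_of_pos hy.1] at h
        linarith [hy.2]
      exact hzbd z (by rw [him]; exact hy.1.le) hge hle
    have hleft : ‖∫ y in (0:ℝ)..R, G ((-R : ℂ) + (y : ℂ) * Complex.I)‖ ≤ C * |R - 0| := by
      apply intervalIntegral.norm_integral_le_of_norm_le_const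
      intro y hy
      rw [Set.uIoc_of_le hR0.le] at hy
      set z : ℂ := (-R : ℂ) + (y : ℂ) * Complex.I with hz_def
      have him : z.im = y := by simp [hz_def]
      have hre : z.re = -R := by simp [hz_def]
      have hge : R ≤ ‖z‖ := by
        have h := Complex.abs_re_le_norm z
        rw [hre, abs_neg, abs_of_pos hR0] at h
        exact h
      have hle : ‖z‖ ≤ 2 * R := by
        have h := Complex.norm_le_abs_re_add_abs_im z
        rw [hre, him, abs_neg, abs_of_pos hR0, abs_of_pos hy.1] at h
        linarith [hy.2]
      exact hzbd z (by rw [him]; exact hy.1.le) hge hle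
    have hnormsum : ‖E R‖ ≤ C * |R - (-R)| + C * |R - 0| + C * |R - 0| := by
      rw [hE_def]
      simp only
      calc ‖(∫ x in (-R)..R, G ((x : ℂ) + (R : ℂ) * Complex.I))
            - Complex.I • (∫ y in (0:ℝ)..R, G ((R : ℂ) + (y : ℂ) * Complex.I))
            + Complex.I • (∫ y in (0:ℝ)..R, G ((-R : ℂ) + (y : ℂ) * Complex.I))‖
          ≤ ‖(∫ x in (-R)..R, G ((x : ℂ) + (R : ℂ) * Complex.I))
            - Complex.I • (∫ y in (0:ℝ)..R, G ((R : ℂ) + (y : ℂ) * Complex.I))‖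
            + ‖Complex.I • (∫ y in (0:ℝ)..R, G ((-R : ℂ) + (y : ℂ) * Complex.I))‖ :=
            norm_add_le _ _
        _ ≤ ‖(∫ x in (-R)..R, G ((x : ℂ) + (R : ℂ) * Complex.I))‖
            + ‖Complex.I • (∫ y in (0:ℝ)..R, G ((R : ℂ) + (y : ℂ) * Complex.I))‖
            + ‖Complex.I • (∫ y in (0:ℝ)..R, G ((-R : ℂ) + (y : ℂ) * Complex.I))‖ := by
            have := norm_sub_le (∫ x in (-R)..R, G ((x : ℂ) + (R : ℂ) * Complex.I))
              (Complex.I • (∫ y in (0:ℝ)..R, G ((R : ℂ) + (y : ℂ) * Complex.I)))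
            linarith
        _ ≤ C * |R - (-R)| + C * |R - 0| + C * |R - 0| := by
            rw [norm_smul, norm_smul, Complex.norm_I, one_mul, one_mul]
            linarith
    have habs1 : |R - (-R)| = 2 * R := by
      rw [sub_neg_eq_add, abs_of_pos (by linarith)]
      ring
    have habs2 : |R - 0| = R := by
      rw [sub_zero, abs_of_pos hR0]
    rw [habs1, habs2] at hnormsum
    have hEle : ‖E R‖ ≤ 4 * R * C := by
      calc ‖E R‖ ≤ C * (2 * R) + C * R + C * R := hnormsum
        _ = 4 * R * C := by ring
    -- final arithmetic
    have hAδ : A ≤ δ * R := by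
      have h1 : A / δ ≤ R - 1 := by linarith
      have h2 : A ≤ δ * (R - 1) := by
        rw [div_le_iff₀ hδ] at h1
        linarith [h1]
      nlinarith
    have hnum : 2 * δ * R + A ≤ 3 * δ * R := by linarith
    have hc2 : c ≤ (R - 1) / 2 := by linarith
    have hden2 : R ^ 2 / 4 ≤ (R - c) ^ 2 := by nlinarith
    have hCle : C ≤ (σ / Real.pi) * (3 * δ * R) / (R ^ 2 / 4) := by
      rw [hC_def]
      apply div_le_div₀ _ _ (by positivity) hden2
      · positivity
      · apply mul_le_mul_of_nonneg_left hnum (div_nonneg hσ.le hπ.le)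
    have heq : 4 * R * ((σ / Real.pi) * (3 * δ * R) / (R ^ 2 / 4)) = 48 * σ * δ / Real.pi := by
      field_simp
      ring
    have hlast : 48 * σ * δ / Real.pi < ε := by
      rw [hδ_def]
      rw [div_lt_iff₀ hπ]
      have h100 : (0:ℝ) < 100 * (σ + 1) := by nlinarith
      have : 48 * σ * (ε * Real.pi / (100 * (σ + 1))) =
          (48 * σ / (100 * (σ + 1))) * (ε * Real.pi) := by
        field_simp
      rw [this]
      have hfrac : 48 * σ / (100 * (σ + 1)) < 1 := by
        rw [div_lt_one h100]
        nlinarith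
      nlinarith [mul_pos hε hπ]
    calc ‖E R‖ ≤ 4 * R * C := hEle
      _ ≤ 4 * R * ((σ / Real.pi) * (3 * δ * R) / (R ^ 2 / 4)) := by
          apply mul_le_mul_of_nonneg_left hCle (by linarith)
      _ = 48 * σ * δ / Real.pi := heq
      _ < ε := hlast
  -- conclusion
  have hbot0 : Tendsto (fun R : ℝ => ∫ x in (-R)..R, G (x : ℂ)) atTop (nhds 0) := by
    apply hE0.congr'
    filter_upwards [eventually_ge_atTop (0:ℝ)] with R hR
    exact (rect_id G V hHV hGdiff R hR).symm
  have hfinal := tendsto_nhds_unique hBlim hbot0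
  rw [hIeq]
  rw [sub_eq_zero] at hfinal
  exact hfinal
end

section
/- Let X follow the Cauchy distribution C(μ, σ) and α ∈ ℍ. Then Var(1/(X+α)) = σ / (Im(α) · |μ + σi + α|²), where Var is the complex variance E[|Y - E[Y]|²]. -/
open Complex MeasureTheory Filter
open Asymptotics Topology

lemma sub_ne_zero'' {p : ℂ} (hp : p.im ≠ 0) (x : ℝ) : (x : ℂ) - p ≠ 0 := by
  intro h
  apply hp
  have := congrArg Complex.im h
  simpa using this.symm

lemma cont_inv {p : ℂ} (hp : p.im ≠ 0) : Continuous fun x : ℝ => ((x : ℂ) - p)⁻¹ :=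
  (Complex.continuous_ofReal.sub continuous_const).inv₀ (sub_ne_zero'' hp)

lemma abs_lower (p : ℂ) {x : ℝ} (h : 2 * |p.re| ≤ |x|) : |x| / 2 ≤ ‖(x:ℂ) - p‖ := by
  have h1 : |x| - |p.re| ≤ |x - p.re| := abs_sub_abs_le_abs_sub _ _
  calc |x| / 2 ≤ |x| - |p.re| := by linarith
    _ ≤ |x - p.re| := h1
    _ = |((x:ℂ) - p).re| := by simp
    _ ≤ ‖(x:ℂ) - p‖ := Complex.abs_re_le_norm _

lemma abs_tendsto_top (p : ℂ) : Tendsto (fun x : ℝ => ‖(x:ℂ) - p‖) atTop atTop := by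
  apply tendsto_atTop_mono' _ _ (tendsto_atTop_add_const_right _ (-p.re) tendsto_id)
  filter_upwards [] with x
  calc x + -p.re = ((x:ℂ) - p).re := by simp [sub_eq_add_neg]
    _ ≤ |((x:ℂ) - p).re| := le_abs_self _
    _ ≤ ‖(x:ℂ) - p‖ := Complex.abs_re_le_norm _

lemma abs_tendsto_bot (p : ℂ) : Tendsto (fun x : ℝ => ‖(x:ℂ) - p‖) atBot atTop := by
  apply tendsto_atTop_mono' _ _ (tendsto_atTop_add_const_right _ p.re tendsto_neg_atBot_atTop)
  filter_upwards [] with x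
  calc -x + p.re = -((x:ℂ) - p).re := by simp; ring
    _ ≤ |((x:ℂ) - p).re| := neg_le_abs _
    _ ≤ ‖(x:ℂ) - p‖ := Complex.abs_re_le_norm _

lemma inv_tendsto_zero {p : ℂ} {l : Filter ℝ}
    (h : Tendsto (fun x : ℝ => ‖(x:ℂ) - p‖) l atTop) :
    Tendsto (fun x : ℝ => ((x:ℂ) - p)⁻¹) l (𝓝 0) := by
  rw [tendsto_zero_iff_norm_tendsto_zero]
  simpa [Pi.inv_def] using h.inv_tendsto_atTop

lemma arg_tendsto_top (p : ℂ) : Tendsto (fun x : ℝ => ((x:ℂ) - p).arg) atTop (𝓝 0) := by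
  have h1 : Tendsto (fun x : ℝ => Real.arcsin (-p.im / ‖(x:ℂ) - p‖)) atTop
      (𝓝 (Real.arcsin 0)) :=
    (Real.continuous_arcsin.tendsto 0).comp (tendsto_const_nhds.div_atTop (abs_tendsto_top p))
  rw [Real.arcsin_zero] at h1
  apply h1.congr'
  filter_upwards [eventually_ge_atTop p.re] with x hx
  rw [Complex.arg_of_re_nonneg (by simpa using sub_nonneg.2 hx)]
  simp

lemma arg_tendsto_bot_upper {p : ℂ} (hp : p.im < 0) :
    Tendsto (fun x : ℝ => ((x:ℂ) - p).arg) atBot (𝓝 Real.pi) := by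
  have h1 : Tendsto (fun x : ℝ => Real.arcsin (p.im / ‖(x:ℂ) - p‖) + Real.pi) atBot
      (𝓝 (Real.arcsin 0 + Real.pi)) :=
    (((Real.continuous_arcsin.tendsto 0).comp
      (tendsto_const_nhds.div_atTop (abs_tendsto_bot p))).add_const Real.pi)
  rw [Real.arcsin_zero, zero_add] at h1
  apply h1.congr'
  filter_upwards [eventually_le_atBot (p.re - 1)] with x hx
  rw [Complex.arg_of_re_neg_of_im_nonneg (by simp; linarith) (by simpa using hp.le)]
  simp

lemma arg_tendsto_bot_lower {p : ℂ} (hp : 0 < p.im) :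
    Tendsto (fun x : ℝ => ((x:ℂ) - p).arg) atBot (𝓝 (-Real.pi)) := by
  have h1 : Tendsto (fun x : ℝ => Real.arcsin (p.im / ‖(x:ℂ) - p‖) - Real.pi) atBot
      (𝓝 (Real.arcsin 0 - Real.pi)) :=
    (((Real.continuous_arcsin.tendsto 0).comp
      (tendsto_const_nhds.div_atTop (abs_tendsto_bot p))).sub_const Real.pi)
  rw [Real.arcsin_zero, zero_sub] at h1
  apply h1.congr'
  filter_upwards [eventually_le_atBot (p.re - 1)] with x hx
  rw [Complex.arg_of_re_neg_of_im_neg (by simp; linarith) (by simp; linarith)]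
  simp

lemma ratio_tendsto {p q : ℂ} (hq : q.im ≠ 0) {l : Filter ℝ}
    (h : Tendsto (fun x : ℝ => ‖(x:ℂ) - q‖) l atTop) :
    Tendsto (fun x : ℝ => ((x:ℂ) - p) / ((x:ℂ) - q)) l (𝓝 1) := by
  have h1 : Tendsto (fun x : ℝ => 1 + (q - p) * ((x:ℂ) - q)⁻¹) l (𝓝 (1 + (q - p) * 0)) :=
    tendsto_const_nhds.add (tendsto_const_nhds.mul (inv_tendsto_zero h))
  rw [mul_zero, add_zero] at h1
  apply h1.congr
  intro x
  have hxq := sub_ne_zero'' hq x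
  field_simp
  ring

lemma logabs_tendsto {p q : ℂ} (hp : p.im ≠ 0) (hq : q.im ≠ 0) {l : Filter ℝ}
    (h : Tendsto (fun x : ℝ => ‖(x:ℂ) - q‖) l atTop) :
    Tendsto (fun x : ℝ => Real.log (‖(x:ℂ) - p‖)
      - Real.log (‖(x:ℂ) - q‖)) l (𝓝 0) := by
  have h1 : Tendsto (fun x : ℝ => Real.log (‖((x:ℂ) - p) / ((x:ℂ) - q)‖)) l
      (𝓝 (Real.log (‖(1:ℂ)‖))) :=
    ((Real.continuousAt_log (by simp)).tendsto.comp
      ((continuous_norm.tendsto (1:ℂ)).comp (ratio_tendsto hq h)))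
  simp only [norm_one, Real.log_one] at h1
  apply h1.congr
  intro x
  rw [norm_div, Real.log_div (norm_ne_zero_iff.mpr (sub_ne_zero'' hp x)) (norm_ne_zero_iff.mpr (sub_ne_zero'' hq x))]

lemma log_eq (z : ℂ) : Complex.log z = (Real.log ‖z‖ : ℂ) + (z.arg : ℂ) * Complex.I := by
  apply Complex.ext <;> simp [Complex.log_re, Complex.log_im]

lemma logdiff_tendsto {p q : ℂ} (hp : p.im ≠ 0) (hq : q.im ≠ 0) {l : Filter ℝ} {a b : ℝ}
    (hl1 : Tendsto (fun x : ℝ => ‖(x:ℂ) - q‖) l atTop)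
    (hl0 : Tendsto (fun x : ℝ => Real.log (‖(x:ℂ) - p‖)
      - Real.log (‖(x:ℂ) - q‖)) l (𝓝 0))
    (h2 : Tendsto (fun x : ℝ => ((x:ℂ) - p).arg) l (𝓝 a))
    (h3 : Tendsto (fun x : ℝ => ((x:ℂ) - q).arg) l (𝓝 b)) :
    Tendsto (fun x : ℝ => Complex.log ((x:ℂ) - p) - Complex.log ((x:ℂ) - q)) l
      (𝓝 (((a - b : ℝ) : ℂ) * Complex.I)) := by
  have hre : Tendsto (fun x : ℝ => ((Real.log (‖(x:ℂ) - p‖)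
      - Real.log (‖(x:ℂ) - q‖) : ℝ) : ℂ)) l (𝓝 ((0 : ℝ) : ℂ)) :=
    (Complex.continuous_ofReal.tendsto 0).comp hl0
  have him : Tendsto (fun x : ℝ => ((((x:ℂ) - p).arg - ((x:ℂ) - q).arg : ℝ) : ℂ) * Complex.I) l
      (𝓝 (((a - b : ℝ) : ℂ) * Complex.I)) :=
    (((Complex.continuous_ofReal.tendsto (a - b)).comp (h2.sub h3)).mul_const Complex.I)
  have := hre.add him
  rw [Complex.ofReal_zero, zero_add] at this
  apply this.congr
  intro x
  rw [log_eq ((x:ℂ) - p), log_eq ((x:ℂ) - q)]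
  push_cast
  ring

lemma norm_bound {p q : ℂ} {x : ℝ} (h1 : 1 ≤ |x|) (h2 : 2 * |p.re| ≤ |x|) (h3 : 2 * |q.re| ≤ |x|) :
    ‖((x:ℂ) - p)⁻¹ * ((x:ℂ) - q)⁻¹‖ ≤ 8 * ‖(1 + x ^ 2)⁻¹‖ := by
  have hx : (0:ℝ) < |x| := by linarith
  have hp := abs_lower p h2
  have hq := abs_lower q h3
  have hax : (0:ℝ) < |x| / 2 := by linarith
  have e1 : ‖((x:ℂ) - p)⁻¹ * ((x:ℂ) - q)⁻¹‖
      = (‖(x:ℂ) - p‖)⁻¹ * (‖(x:ℂ) - q‖)⁻¹ := by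
    simp [map_mul]
  rw [e1]
  have b1 : (‖(x:ℂ) - p‖)⁻¹ ≤ (|x| / 2)⁻¹ := by
    apply inv_anti₀ hax hp
  have b2 : (‖(x:ℂ) - q‖)⁻¹ ≤ (|x| / 2)⁻¹ := by
    apply inv_anti₀ hax hq
  have hnn : (0:ℝ) ≤ (‖(x:ℂ) - p‖)⁻¹ := by positivity
  calc (‖(x:ℂ) - p‖)⁻¹ * (‖(x:ℂ) - q‖)⁻¹
      ≤ (|x| / 2)⁻¹ * (|x| / 2)⁻¹ := by
        apply mul_le_mul b1 b2 (by positivity) (by positivity)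
    _ = 4 / |x| ^ 2 := by field_simp; ring
    _ ≤ 8 * ‖(1 + x ^ 2)⁻¹‖ := by
        have hx2 : (0:ℝ) < 1 + x ^ 2 := by positivity
        have h1' : (1:ℝ) ≤ x ^ 2 := by nlinarith [_root_.sq_abs x, sq_nonneg (|x| - 1), abs_nonneg x]
        have e8 : 8 * (1 + x ^ 2)⁻¹ = 8 / (1 + x ^ 2) := by ring
        rw [Real.norm_eq_abs, abs_of_pos (by positivity : (0:ℝ) < (1 + x ^ 2)⁻¹), e8, _root_.sq_abs,
          div_le_div_iff₀ (by positivity) (by positivity)]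
        nlinarith

lemma integrable_two_poles {p q : ℂ} (hp : p.im ≠ 0) (hq : q.im ≠ 0) :
    Integrable fun x : ℝ => ((x:ℂ) - p)⁻¹ * ((x:ℂ) - q)⁻¹ := by
  have hcont : Continuous fun x : ℝ => ((x:ℂ) - p)⁻¹ * ((x:ℂ) - q)⁻¹ :=
    (cont_inv hp).mul (cont_inv hq)
  have hev_top : ∀ᶠ x : ℝ in atTop, ‖((x:ℂ) - p)⁻¹ * ((x:ℂ) - q)⁻¹‖ ≤ 8 * ‖(1 + x ^ 2)⁻¹‖ := by
    filter_upwards [eventually_ge_atTop (max 1 (max (2 * |p.re|) (2 * |q.re|)))] with x hx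
    have h1 : 1 ≤ |x| := le_trans (le_trans (le_max_left _ _) hx) (le_abs_self x)
    have h2 : 2 * |p.re| ≤ |x| :=
      le_trans (le_trans (le_trans (le_max_left _ _) (le_max_right _ _)) hx) (le_abs_self x)
    have h3 : 2 * |q.re| ≤ |x| :=
      le_trans (le_trans (le_trans (le_max_right _ _) (le_max_right _ _)) hx) (le_abs_self x)
    exact norm_bound h1 h2 h3
  have hev_bot : ∀ᶠ x : ℝ in atBot, ‖((x:ℂ) - p)⁻¹ * ((x:ℂ) - q)⁻¹‖ ≤ 8 * ‖(1 + x ^ 2)⁻¹‖ := by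
    filter_upwards [eventually_le_atBot (-(max 1 (max (2 * |p.re|) (2 * |q.re|))))] with x hx
    have hM : (1:ℝ) ≤ max 1 (max (2 * |p.re|) (2 * |q.re|)) := le_max_left _ _
    have hxneg : x ≤ 0 := by linarith
    have hx' : max 1 (max (2 * |p.re|) (2 * |q.re|)) ≤ |x| := by
      rw [abs_of_nonpos hxneg]; linarith
    have h1 : 1 ≤ |x| := le_trans (le_max_left _ _) hx'
    have h2 : 2 * |p.re| ≤ |x| := le_trans (le_trans (le_max_left _ _) (le_max_right _ _)) hx'
    have h3 : 2 * |q.re| ≤ |x| := le_trans (le_trans (le_max_right _ _) (le_max_right _ _)) hx'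
    exact norm_bound h1 h2 h3
  have hIAF : IntegrableAtFilter (fun x : ℝ => (1 + x ^ 2)⁻¹) atBot (volume : Measure ℝ) :=
    ⟨Set.univ, Filter.univ_mem, integrable_inv_one_add_sq.integrableOn⟩
  have hIAF' : IntegrableAtFilter (fun x : ℝ => (1 + x ^ 2)⁻¹) atTop (volume : Measure ℝ) :=
    ⟨Set.univ, Filter.univ_mem, integrable_inv_one_add_sq.integrableOn⟩
  exact hcont.locallyIntegrable.integrable_of_isBigO_atBot_atTop
    (isBigO_iff.mpr ⟨8, hev_bot⟩) hIAF (isBigO_iff.mpr ⟨8, hev_top⟩) hIAF'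

lemma hasDerivAt_F {p q : ℂ} (hp : p.im ≠ 0) (hq : q.im ≠ 0) (hpq : p ≠ q) (x : ℝ) :
    HasDerivAt (fun y : ℝ => (p - q)⁻¹ * (Complex.log ((y:ℂ) - p) - Complex.log ((y:ℂ) - q)))
      (((x:ℂ) - p)⁻¹ * ((x:ℂ) - q)⁻¹) x := by
  have hxp := sub_ne_zero'' hp x
  have hxq := sub_ne_zero'' hq x
  have hmemp : (x:ℂ) - p ∈ Complex.slitPlane := by
    rw [Complex.mem_slitPlane_iff]; right; simpa using hp
  have hmemq : (x:ℂ) - q ∈ Complex.slitPlane := by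
    rw [Complex.mem_slitPlane_iff]; right; simpa using hq
  have d1 : HasDerivAt (fun z : ℂ => Complex.log (z - p)) (1 / ((x:ℂ) - p)) ((x:ℂ)) :=
    ((hasDerivAt_id ((x:ℂ))).sub_const p).clog hmemp
  have d2 : HasDerivAt (fun z : ℂ => Complex.log (z - q)) (1 / ((x:ℂ) - q)) ((x:ℂ)) :=
    ((hasDerivAt_id ((x:ℂ))).sub_const q).clog hmemq
  have d3 := ((d1.sub d2).const_mul ((p - q)⁻¹)).comp_ofReal
  convert d3 using 1
  have hpq' : p - q ≠ 0 := sub_ne_zero.mpr hpq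
  · rfl
  · field_simp
    ring

lemma integral_two_poles {p q : ℂ} (hp : 0 < p.im) (hq : q.im < 0) :
    ∫ x : ℝ, ((x:ℂ) - p)⁻¹ * ((x:ℂ) - q)⁻¹
      = 2 * Real.pi * Complex.I / (p - q) := by
  have hp' : p.im ≠ 0 := ne_of_gt hp
  have hq' : q.im ≠ 0 := ne_of_lt hq
  have hpq : p ≠ q := fun h => absurd (h ▸ hp) (by simp [asymm]; exact le_of_lt hq)
  have htop : Tendsto (fun x : ℝ =>
      (p - q)⁻¹ * (Complex.log ((x:ℂ) - p) - Complex.log ((x:ℂ) - q))) atTop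
      (𝓝 ((p - q)⁻¹ * (((0 - 0 : ℝ) : ℂ) * Complex.I))) :=
    tendsto_const_nhds.mul (logdiff_tendsto hp' hq' (abs_tendsto_top q)
      (logabs_tendsto hp' hq' (abs_tendsto_top q)) (arg_tendsto_top p) (arg_tendsto_top q))
  have hbot : Tendsto (fun x : ℝ =>
      (p - q)⁻¹ * (Complex.log ((x:ℂ) - p) - Complex.log ((x:ℂ) - q))) atBot
      (𝓝 ((p - q)⁻¹ * (((-Real.pi - Real.pi : ℝ) : ℂ) * Complex.I))) :=
    tendsto_const_nhds.mul (logdiff_tendsto hp' hq' (abs_tendsto_bot q)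
      (logabs_tendsto hp' hq' (abs_tendsto_bot q)) (arg_tendsto_bot_lower hp)
      (arg_tendsto_bot_upper hq))
  rw [integral_of_hasDerivAt_of_tendsto (hasDerivAt_F hp' hq' hpq)
    (integrable_two_poles hp' hq') hbot htop]
  have hpq' : p - q ≠ 0 := sub_ne_zero.mpr hpq
  push_cast
  field_simp
  ring

lemma integral_two_poles_lower {p q : ℂ} (hp : p.im < 0) (hq : q.im < 0) :
    ∫ x : ℝ, ((x:ℂ) - p)⁻¹ * ((x:ℂ) - q)⁻¹ = 0 := by
  have hp' : p.im ≠ 0 := ne_of_lt hp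
  have hq' : q.im ≠ 0 := ne_of_lt hq
  by_cases hpq : p = q
  · subst hpq
    have hderiv : ∀ x : ℝ, HasDerivAt (fun y : ℝ => -((y:ℂ) - p)⁻¹)
        (((x:ℂ) - p)⁻¹ * ((x:ℂ) - p)⁻¹) x := by
      intro x
      have hxp := sub_ne_zero'' hp' x
      have d1 : HasDerivAt (fun z : ℂ => -(z - p)⁻¹) (-(-1 / ((x:ℂ) - p) ^ 2)) ((x:ℂ)) :=
        (((hasDerivAt_id ((x:ℂ))).sub_const p).inv hxp).neg
      have := d1.comp_ofReal
      convert this using 1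
      field_simp
    have htop : Tendsto (fun x : ℝ => -((x:ℂ) - p)⁻¹) atTop (𝓝 (-0)) :=
      (inv_tendsto_zero (abs_tendsto_top p)).neg
    have hbot : Tendsto (fun x : ℝ => -((x:ℂ) - p)⁻¹) atBot (𝓝 (-0)) :=
      (inv_tendsto_zero (abs_tendsto_bot p)).neg
    rw [integral_of_hasDerivAt_of_tendsto hderiv (integrable_two_poles hp' hp') hbot htop]
    simp
  · have htop : Tendsto (fun x : ℝ =>
        (p - q)⁻¹ * (Complex.log ((x:ℂ) - p) - Complex.log ((x:ℂ) - q))) atTop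
        (𝓝 ((p - q)⁻¹ * (((0 - 0 : ℝ) : ℂ) * Complex.I))) :=
      tendsto_const_nhds.mul (logdiff_tendsto hp' hq' (abs_tendsto_top q)
        (logabs_tendsto hp' hq' (abs_tendsto_top q)) (arg_tendsto_top p) (arg_tendsto_top q))
    have hbot : Tendsto (fun x : ℝ =>
        (p - q)⁻¹ * (Complex.log ((x:ℂ) - p) - Complex.log ((x:ℂ) - q))) atBot
        (𝓝 ((p - q)⁻¹ * (((Real.pi - Real.pi : ℝ) : ℂ) * Complex.I))) :=
      tendsto_const_nhds.mul (logdiff_tendsto hp' hq' (abs_tendsto_bot q)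
        (logabs_tendsto hp' hq' (abs_tendsto_bot q)) (arg_tendsto_bot_upper hp)
        (arg_tendsto_bot_upper hq))
    rw [integral_of_hasDerivAt_of_tendsto (hasDerivAt_F hp' hq' hpq)
      (integrable_two_poles hp' hq') hbot htop]
    simp

section

variable {m σ : ℝ}

lemma denom_pos (hσ : 0 < σ) (x : ℝ) : 0 < (x - m) ^ 2 + σ ^ 2 := by positivity

lemma density_cont (hσ : 0 < σ) : Continuous fun x : ℝ => (σ / Real.pi) / ((x - m) ^ 2 + σ ^ 2) :=
  continuous_const.div (((continuous_id.sub continuous_const).pow 2).add continuous_const)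
    (fun x => ne_of_gt (denom_pos hσ x))

lemma poles_mul (x m σ : ℝ) :
    ((x:ℂ) - ((m:ℂ) + σ * Complex.I)) * ((x:ℂ) - ((m:ℂ) - σ * Complex.I))
      = (((x - m) ^ 2 + σ ^ 2 : ℝ) : ℂ) := by
  push_cast
  ring_nf
  rw [Complex.I_sq]
  ring

lemma density_eq (hσ : 0 < σ) (x : ℝ) :
    (((σ / Real.pi) / ((x - m) ^ 2 + σ ^ 2) : ℝ) : ℂ)
      = ((σ : ℂ) / Real.pi) * (((x:ℂ) - ((m:ℂ) + σ * Complex.I))⁻¹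
          * ((x:ℂ) - ((m:ℂ) - σ * Complex.I))⁻¹) := by
  rw [← mul_inv, poles_mul, Complex.ofReal_div, Complex.ofReal_div, div_eq_mul_inv]

lemma cauchy_transfer (hσ : 0 < σ) (f : ℝ → ℂ) :
    ∫ x, f x ∂(cauchyMeasure m σ)
      = ∫ x : ℝ, (((σ / Real.pi) / ((x - m) ^ 2 + σ ^ 2) : ℝ) : ℂ) * f x := by
  have hmeas : Measurable fun x : ℝ =>
      Real.toNNReal ((σ / Real.pi) / ((x - m) ^ 2 + σ ^ 2)) :=
    (continuous_real_toNNReal.comp (density_cont hσ)).measurable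
  have heq : cauchyMeasure m σ = MeasureTheory.volume.withDensity
      (fun x => ((Real.toNNReal ((σ / Real.pi) / ((x - m) ^ 2 + σ ^ 2)) : NNReal) : ENNReal)) := rfl
  rw [heq, integral_withDensity_eq_integral_smul hmeas]
  congr 1
  funext x
  rw [NNReal.smul_def, Real.coe_toNNReal _ (le_of_lt (by positivity)), Complex.real_smul]

lemma cauchy_inv_int (hσ : 0 < σ) {q : ℂ} (hq : q.im < 0) :
    ∫ x, ((x:ℂ) - q)⁻¹ ∂(cauchyMeasure m σ) = (((m:ℂ) + σ * Complex.I) - q)⁻¹ := by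
  have hβim : ((m:ℂ) + σ * Complex.I).im = σ := by simp
  have hβ'im : ((m:ℂ) - σ * Complex.I).im = -σ := by simp
  have hβpos : 0 < ((m:ℂ) + σ * Complex.I).im := by rw [hβim]; exact hσ
  have hβ'neg : ((m:ℂ) - σ * Complex.I).im < 0 := by rw [hβ'im]; linarith
  have hπ : (Real.pi : ℂ) ≠ 0 := Complex.ofReal_ne_zero.mpr Real.pi_ne_zero
  have hσ' : (σ : ℂ) ≠ 0 := Complex.ofReal_ne_zero.mpr (ne_of_gt hσ)
  have hβq : ((m:ℂ) + σ * Complex.I) - q ≠ 0 := by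
    intro h
    have h3 : ((m:ℂ) + σ * Complex.I - q).im = 0 := by rw [h]; simp
    simp at h3
    linarith
  rw [cauchy_transfer hσ]
  have hrw : (fun x : ℝ => (((σ / Real.pi) / ((x - m) ^ 2 + σ ^ 2) : ℝ) : ℂ) * ((x:ℂ) - q)⁻¹)
      = fun x : ℝ => ((σ : ℂ) / Real.pi) * ((2 * σ * Complex.I)⁻¹)
        * (((x:ℂ) - ((m:ℂ) + σ * Complex.I))⁻¹ * ((x:ℂ) - q)⁻¹
          - ((x:ℂ) - ((m:ℂ) - σ * Complex.I))⁻¹ * ((x:ℂ) - q)⁻¹) := by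
    funext x
    rw [density_eq hσ]
    have h1 := sub_ne_zero'' (p := (m:ℂ) + σ * Complex.I) (by rw [hβim]; exact ne_of_gt hσ) x
    have h2 := sub_ne_zero'' (p := (m:ℂ) - σ * Complex.I)
      (by rw [hβ'im]; exact neg_ne_zero.mpr (ne_of_gt hσ)) x
    have h3 := sub_ne_zero'' (ne_of_lt hq) x
    have key : ∀ u v w : ℂ, u ≠ 0 → v ≠ 0 → u - v ≠ 0 →
        u⁻¹ * v⁻¹ * w = (u - v)⁻¹ * (v⁻¹ * w - u⁻¹ * w) := by
      intro u v w hu hv huv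
      field_simp
    have huv : ((x:ℂ) - ((m:ℂ) + σ * Complex.I)) - ((x:ℂ) - ((m:ℂ) - σ * Complex.I))
        = -(2 * σ * Complex.I) := by ring
    have hneg : (2 * (σ:ℂ) * Complex.I) ≠ 0 := by
      simp [hσ', Complex.I_ne_zero]
    calc ((σ:ℂ) / Real.pi) * (((x:ℂ) - ((m:ℂ) + σ * Complex.I))⁻¹
          * ((x:ℂ) - ((m:ℂ) - σ * Complex.I))⁻¹) * ((x:ℂ) - q)⁻¹
        = ((σ:ℂ) / Real.pi) * (((x:ℂ) - ((m:ℂ) + σ * Complex.I))⁻¹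
          * ((x:ℂ) - ((m:ℂ) - σ * Complex.I))⁻¹ * ((x:ℂ) - q)⁻¹) := by ring
      _ = ((σ:ℂ) / Real.pi) * ((((x:ℂ) - ((m:ℂ) + σ * Complex.I))
            - ((x:ℂ) - ((m:ℂ) - σ * Complex.I)))⁻¹
          * (((x:ℂ) - ((m:ℂ) - σ * Complex.I))⁻¹ * ((x:ℂ) - q)⁻¹
            - ((x:ℂ) - ((m:ℂ) + σ * Complex.I))⁻¹ * ((x:ℂ) - q)⁻¹)) := by
          rw [key _ _ _ h1 h2 (by rw [huv]; simpa using hneg)]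
      _ = _ := by rw [huv, inv_neg]; ring
  rw [hrw, MeasureTheory.integral_const_mul,
    MeasureTheory.integral_sub (integrable_two_poles (ne_of_gt hβpos) (ne_of_lt hq))
      (integrable_two_poles (ne_of_lt hβ'neg) (ne_of_lt hq)),
    integral_two_poles hβpos hq, integral_two_poles_lower hβ'neg hq]
  rw [sub_zero]
  have hI := Complex.I_ne_zero
  have hone : (σ:ℂ) / Real.pi * (2 * σ * Complex.I)⁻¹ * (2 * Real.pi * Complex.I) = 1 := by
    field_simp
  rw [div_eq_mul_inv]
  linear_combination ((((m:ℂ) + σ * Complex.I) - q)⁻¹) * hone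

lemma cauchy_density_integrable (hσ : 0 < σ) :
    Integrable fun x : ℝ => (σ / Real.pi) / ((x - m) ^ 2 + σ ^ 2) := by
  have hβim : ((m:ℂ) + σ * Complex.I).im = σ := by simp
  have hβ'im : ((m:ℂ) - σ * Complex.I).im = -σ := by simp
  have h := ((integrable_two_poles (p := (m:ℂ) + σ * Complex.I) (q := (m:ℂ) - σ * Complex.I)
    (by rw [hβim]; exact ne_of_gt hσ) (by rw [hβ'im]; exact neg_ne_zero.mpr (ne_of_gt hσ))).norm.const_mul
    (σ / Real.pi))
  apply h.congr
  filter_upwards [] with x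
  rw [← mul_inv, poles_mul, norm_inv, Complex.norm_real, Real.norm_eq_abs,
    abs_of_pos (denom_pos hσ x), div_eq_mul_inv]
  ring

lemma cauchy_density_one (hσ : 0 < σ) :
    ∫ x : ℝ, (σ / Real.pi) / ((x - m) ^ 2 + σ ^ 2) = 1 := by
  have hβim : ((m:ℂ) + σ * Complex.I).im = σ := by simp
  have hβ'im : ((m:ℂ) - σ * Complex.I).im = -σ := by simp
  have hπ : (Real.pi : ℂ) ≠ 0 := Complex.ofReal_ne_zero.mpr Real.pi_ne_zero
  have hσ' : (σ : ℂ) ≠ 0 := Complex.ofReal_ne_zero.mpr (ne_of_gt hσ)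
  have hc : ∫ x : ℝ, (((σ / Real.pi) / ((x - m) ^ 2 + σ ^ 2) : ℝ) : ℂ) = 1 := by
    have hre : (fun x : ℝ => (((σ / Real.pi) / ((x - m) ^ 2 + σ ^ 2) : ℝ) : ℂ))
        = fun x : ℝ => ((σ : ℂ) / Real.pi) * (((x:ℂ) - ((m:ℂ) + σ * Complex.I))⁻¹
          * ((x:ℂ) - ((m:ℂ) - σ * Complex.I))⁻¹) := by
      funext x; exact density_eq hσ x
    rw [hre, MeasureTheory.integral_const_mul,
      integral_two_poles (by rw [hβim]; exact hσ) (by rw [hβ'im]; linarith)]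
    have hd : ((m:ℂ) + σ * Complex.I) - ((m:ℂ) - σ * Complex.I) = 2 * σ * Complex.I := by ring
    rw [hd]
    have hI := Complex.I_ne_zero
    have hone : (σ:ℂ) / Real.pi * (2 * σ * Complex.I)⁻¹ * (2 * Real.pi * Complex.I) = 1 := by
      field_simp
    rw [div_eq_mul_inv]
    linear_combination hone
  have hor := integral_ofReal (𝕜 := ℂ) (μ := (volume : Measure ℝ))
    (f := fun x : ℝ => σ / Real.pi / ((x - m) ^ 2 + σ ^ 2))
  have h2 : ((∫ x : ℝ, σ / Real.pi / ((x - m) ^ 2 + σ ^ 2) : ℝ) : ℂ) = 1 := hor.symm.trans hc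
  exact_mod_cast h2

lemma cauchy_prob (hσ : 0 < σ) : IsProbabilityMeasure (cauchyMeasure m σ) := by
  constructor
  rw [cauchyMeasure, withDensity_apply _ MeasurableSet.univ, Measure.restrict_univ,
    ← MeasureTheory.ofReal_integral_eq_lintegral_ofReal (cauchy_density_integrable hσ)
      (Filter.Eventually.of_forall fun x => le_of_lt (by positivity)),
    cauchy_density_one hσ, ENNReal.ofReal_one]

end

lemma final_alg (a s R : ℝ) (W V : ℂ) (ha : a ≠ 0) (hR : R ≠ 0)
    (hW : W ≠ 0) (hV : V ≠ 0)
    (hWV : W * V = (R : ℂ)) (hsub : W - V = ((2 * (s + a) : ℝ) : ℂ) * Complex.I) :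
    (((2 * a : ℝ) : ℂ) * Complex.I)⁻¹ * (V⁻¹ - W⁻¹) - W⁻¹ * V⁻¹
      = ((s / (a * R) : ℝ) : ℂ) := by
  have hI := Complex.I_ne_zero
  rw [inv_sub_inv hV hW, mul_comm V W, hWV, hsub, ← mul_inv, hWV]
  have ha' : ((a : ℝ) : ℂ) ≠ 0 := by simpa using ha
  have hR' : ((R : ℝ) : ℂ) ≠ 0 := by simpa using hR
  push_cast
  field_simp
  ring_nf

theorem stmt_17 (m σ : ℝ) (hσ : 0 < σ) (α : ℂ) (hα : 0 < α.im) :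
    ∫ x : ℝ, ‖(((x : ℂ) + α)⁻¹
        - ∫ y : ℝ, ((y : ℂ) + α)⁻¹ ∂(cauchyMeasure m σ))‖ ^ 2 ∂(cauchyMeasure m σ)
      = σ / (α.im * ‖((m : ℂ) + σ * Complex.I + α)‖ ^ 2) := by
  haveI : IsProbabilityMeasure (cauchyMeasure m σ) := cauchy_prob hσ
  set μ := cauchyMeasure m σ with hμ
  set f : ℝ → ℂ := fun x => ((x:ℂ) + α)⁻¹ with hf
  set c : ℂ := ∫ y : ℝ, ((y:ℂ) + α)⁻¹ ∂μ with hcdef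
  set w : ℂ := (m:ℂ) + σ * Complex.I + α with hwdef
  -- basic nonvanishing
  have haim : α.im ≠ 0 := ne_of_gt hα
  have hadd_ne : ∀ x : ℝ, ((x:ℂ) + α) ≠ 0 := by
    intro x h
    have : ((x:ℂ) + α).im = 0 := by rw [h]; simp
    simp at this
    exact haim this
  have hwim : w.im = σ + α.im := by simp [hwdef]
  have hw : w ≠ 0 := by
    intro h
    have : w.im = 0 := by rw [h]; simp
    rw [hwim] at this
    linarith
  -- value of c
  have hc : c = w⁻¹ := by
    have h := cauchy_inv_int (m := m) hσ (q := -α) (by simpa using hα)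
    simp only [sub_neg_eq_add] at h
    rw [hcdef, hμ, h, hwdef]
  -- continuity and integrability
  have hfc : Continuous f :=
    (Complex.continuous_ofReal.add continuous_const).inv₀ hadd_ne
  have hfbdd : ∀ x : ℝ, ‖f x‖ ≤ (α.im)⁻¹ := by
    intro x
    rw [hf, norm_inv]
    apply inv_anti₀ hα
    calc α.im = |((x:ℂ) + α).im| := by simp [abs_of_pos hα]
      _ ≤ ‖(x:ℂ) + α‖ := Complex.abs_im_le_norm _
  have hintf : Integrable f μ :=
    Integrable.mono' (integrable_const ((α.im)⁻¹)) hfc.aestronglyMeasurable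
      (Filter.Eventually.of_forall hfbdd)
  have hintfc : Integrable (fun x => (starRingEnd ℂ) (f x)) μ :=
    Integrable.mono' (integrable_const ((α.im)⁻¹))
      (Complex.continuous_conj.comp hfc).aestronglyMeasurable
      (Filter.Eventually.of_forall (fun x => by simpa using hfbdd x))
  have hintff : Integrable (fun x => f x * (starRingEnd ℂ) (f x)) μ :=
    Integrable.mono' (integrable_const ((α.im)⁻¹ * (α.im)⁻¹))
      (hfc.mul (Complex.continuous_conj.comp hfc)).aestronglyMeasurable
      (Filter.Eventually.of_forall (fun x => by
        rw [norm_mul]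
        exact mul_le_mul (hfbdd x) (by simpa using hfbdd x) (norm_nonneg _)
          (inv_nonneg.mpr (le_of_lt hα))))
  have hintG : Integrable (fun x => (f x - c) * (starRingEnd ℂ) (f x - c)) μ := by
    apply Integrable.mono' (integrable_const (((α.im)⁻¹ + ‖c‖) * ((α.im)⁻¹ + ‖c‖)))
      (((hfc.sub continuous_const).mul
        (Complex.continuous_conj.comp (hfc.sub continuous_const))).aestronglyMeasurable)
    apply Filter.Eventually.of_forall
    intro x
    rw [Pi.mul_apply, norm_mul]
    have h1 : ‖f x - c‖ ≤ (α.im)⁻¹ + ‖c‖ :=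
      le_trans (norm_sub_le _ _) (add_le_add_left (hfbdd x) _)
    have h2 : ‖(starRingEnd ℂ) (f x - c)‖ ≤ (α.im)⁻¹ + ‖c‖ := by
      rw [Complex.norm_conj]
      exact h1
    exact mul_le_mul h1 h2 (norm_nonneg _) (le_trans (norm_nonneg _) h1)
  -- conj of f integral
  have hconjf : ∫ x, (starRingEnd ℂ) (f x) ∂μ = (starRingEnd ℂ) c := by
    rw [hcdef, ← integral_conj]
  -- step 1: rewrite integrand
  have step1 : ∫ x : ℝ, ‖f x - c‖ ^ 2 ∂μ
      = ∫ x : ℝ, ((f x - c) * (starRingEnd ℂ) (f x - c)).re ∂μ := by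
    congr 1
    funext x
    rw [Complex.mul_conj, Complex.ofReal_re, Complex.sq_norm]
  -- step 2: real part out
  have step2 : ∫ x : ℝ, ((f x - c) * (starRingEnd ℂ) (f x - c)).re ∂μ
      = (∫ x : ℝ, (f x - c) * (starRingEnd ℂ) (f x - c) ∂μ).re := by
    have := integral_re (f := fun x => (f x - c) * (starRingEnd ℂ) (f x - c)) hintG
    simpa using this
  -- step 3: expand the square
  have expand : (fun x : ℝ => (f x - c) * (starRingEnd ℂ) (f x - c))
      = fun x : ℝ => (f x * (starRingEnd ℂ) (f x) - c * (starRingEnd ℂ) (f x)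
          - (starRingEnd ℂ) c * f x) + c * (starRingEnd ℂ) c := by
    funext x
    rw [map_sub]
    ring
  have hint3 : Integrable (fun x : ℝ => f x * (starRingEnd ℂ) (f x)
      - c * (starRingEnd ℂ) (f x) - (starRingEnd ℂ) c * f x) μ :=
    (hintff.sub (hintfc.const_mul c)).sub (hintf.const_mul ((starRingEnd ℂ) c))
  have step3 : ∫ x : ℝ, (f x - c) * (starRingEnd ℂ) (f x - c) ∂μ
      = (∫ x, f x * (starRingEnd ℂ) (f x) ∂μ) - c * (starRingEnd ℂ) c := by
    have hint2 : Integrable (fun x : ℝ => f x * (starRingEnd ℂ) (f x)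
        - c * (starRingEnd ℂ) (f x)) μ := hintff.sub (hintfc.const_mul c)
    rw [expand, integral_add hint3 (integrable_const _),
      integral_sub hint2 (hintf.const_mul ((starRingEnd ℂ) c)),
      integral_sub hintff (hintfc.const_mul c),
      MeasureTheory.integral_const_mul, MeasureTheory.integral_const_mul, hconjf,
      integral_const, probReal_univ, one_smul, ← hcdef]
    ring
  -- step 4: value of ∫ f * conj f
  have hdecomp : (fun x : ℝ => f x * (starRingEnd ℂ) (f x))
      = fun x : ℝ => (α - (starRingEnd ℂ) α)⁻¹ * ((starRingEnd ℂ) (f x) - f x) := by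
    funext x
    have hu : ((x:ℂ) + α) ≠ 0 := hadd_ne x
    have hv : ((x:ℂ) + (starRingEnd ℂ) α) ≠ 0 := by
      intro h
      have : ((x:ℂ) + (starRingEnd ℂ) α).im = 0 := by rw [h]; simp
      simp at this
      exact haim this
    have hcf : (starRingEnd ℂ) (f x) = ((x:ℂ) + (starRingEnd ℂ) α)⁻¹ := by
      rw [hf]
      simp [map_inv₀, Complex.conj_ofReal]
    have huv : ((x:ℂ) + α) - ((x:ℂ) + (starRingEnd ℂ) α) = α - (starRingEnd ℂ) α := by ring
    have hαα : α - (starRingEnd ℂ) α ≠ 0 := by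
      rw [Complex.sub_conj]
      simp [haim, Complex.I_ne_zero]
    rw [hf, hcf]
    field_simp
    linear_combination (((x:ℂ) + α) * ((x:ℂ) + (starRingEnd ℂ) α)) *
      huv.symm
  have hconjint : ∫ x, (starRingEnd ℂ) (f x) ∂μ = (starRingEnd ℂ) c := hconjf
  have step4 : ∫ x, f x * (starRingEnd ℂ) (f x) ∂μ
      = (α - (starRingEnd ℂ) α)⁻¹ * ((starRingEnd ℂ) c - c) := by
    rw [hdecomp, MeasureTheory.integral_const_mul, integral_sub hintfc hintf, hconjf, ← hcdef]
  -- final algebra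
  have hcw : (starRingEnd ℂ) c = ((starRingEnd ℂ) w)⁻¹ := by rw [hc, map_inv₀]
  have hwc_ne : (starRingEnd ℂ) w ≠ 0 := by simpa using hw
  have hR : ‖w‖ ^ 2 ≠ 0 := pow_ne_zero 2 (norm_ne_zero_iff.mpr hw)
  have e1 : α - (starRingEnd ℂ) α = ((2 * α.im : ℝ) : ℂ) * Complex.I := Complex.sub_conj α
  have e3 : w - (starRingEnd ℂ) w = ((2 * (σ + α.im) : ℝ) : ℂ) * Complex.I := by
    rw [Complex.sub_conj, hwim]
  have e4 : w * (starRingEnd ℂ) w = ((‖w‖ ^ 2 : ℝ) : ℂ) := by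
    rw [Complex.mul_conj, Complex.sq_norm]
  have hfinal := final_alg α.im σ (‖w‖ ^ 2) w ((starRingEnd ℂ) w)
    haim hR hw hwc_ne e4 e3
  rw [step1, step2, step3, step4, hcw, hc, e1, hfinal, Complex.ofReal_re]
end
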